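/- Let 𝒜 be an m-order n-dimensional strong M-tensor with a_{ii…i} = 1 for all i, let 1 ≤ k = s ≤ n−1, and let α_i ∈ [0,1], β_j ∈ [0,1]. Suppose condition (11) holds: 0 < α_i a_{i(i+k)…(i+k)} a_{(i+k)i…i} < 1 for i = 1,…,k; 0 < α_i a_{i(i+k)…(i+k)} a_{(i+k)i…i} + β_i a_{i(i−k)…(i−k)} a_{(i−k)i…i} < 1 for i = k+1,…,n−k; and 0 < β_i a_{i(i−k)…(i−k)} a_{(i−k)i…i} < 1 for i = n−k+1,…,n. Then the Gauss–Seidel-type splitting 𝒜_{αβ}(s,k) = 𝓜₂ − 𝓝₂ is a weak regular splitting and is convergent, i.e. ρ(M(𝓜₂)^{−1}𝓝₂) < 1. -/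

import Mathlib

open scoped BigOperators

namespace MultilinearPaper

noncomputable section

/-- An `m`-order `n`-dimensional real tensor: the first index is separated and
the remaining `m - 1` indices are given as a function `Fin (m-1) → Fin n`. -/
abbrev Tensor (m n : ℕ) : Type := Fin n → (Fin (m - 1) → Fin n) → ℝ

variable {m n : ℕ}

/-- The vector `𝒜 x^{m-1}` (real version):
`(𝒜 x^{m-1})_i = ∑_{i₂,…,i_m} a_{i i₂ … i_m} x_{i₂} ⋯ x_{i_m}`. -/
def tmul (A : Tensor m n) (x : Fin n → ℝ) : Fin n → ℝ :=
  fun i => ∑ f : Fin (m - 1) → Fin n, A i f * ∏ t, x (f t)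

/-- The vector `𝒜 x^{m-1}` evaluated at a complex vector. -/
def tmulC (A : Tensor m n) (x : Fin n → ℂ) : Fin n → ℂ :=
  fun i => ∑ f : Fin (m - 1) → Fin n, (A i f : ℂ) * ∏ t, x (f t)

/-- The identity tensor `𝓘`. -/
def idT (m n : ℕ) : Tensor m n :=
  fun i f => if ∀ t, f t = i then 1 else 0

/-- Entrywise nonnegativity of a tensor. -/
def TNonneg (A : Tensor m n) : Prop := ∀ i f, 0 ≤ A i f

/-- `lam` is an eigenvalue of `A`: there is `x ≠ 0` over `ℂ` with
`𝒜 x^{m-1} = lam • x^{[m-1]}`. -/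
def IsEigenvalue (A : Tensor m n) (lam : ℂ) : Prop :=
  ∃ x : Fin n → ℂ, x ≠ 0 ∧ ∀ i, tmulC A x i = lam * (x i) ^ (m - 1)

/-- Spectral radius: supremum of moduli of eigenvalues. -/
def rho (A : Tensor m n) : ℝ :=
  sSup {r : ℝ | ∃ lam : ℂ, IsEigenvalue A lam ∧ r = ‖lam‖}

/-- `A` is a strong M-tensor: `A = η 𝓘 - B` with `B ≥ 0` and `η > ρ(B)`. -/
def StrongM (A : Tensor m n) : Prop :=
  ∃ (η : ℝ) (B : Tensor m n), TNonneg B ∧ rho B < η ∧ A = η • idT m n - B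

/-- Matrix–tensor product `(P𝓑)_{j i₂…i_m} = ∑_{j₂} P_{j j₂} b_{j₂ i₂ … i_m}`. -/
def mmul (P : Matrix (Fin n) (Fin n) ℝ) (A : Tensor m n) : Tensor m n :=
  fun j f => ∑ j₂, P j j₂ * A j₂ f

/-- Majorization matrix `M(𝒜)_{ij} = a_{i j … j}`. -/
def maj (A : Tensor m n) : Matrix (Fin n) (Fin n) ℝ :=
  fun i j => A i (fun _ => j)

/-- `a_{i i … i} = 1` for all `i`. -/
def UnitDiag (A : Tensor m n) : Prop := ∀ i, A i (fun _ => i) = 1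

/-- `L`: the negatives of the strictly lower triangular entries of `M(𝒜)`. -/
def Lmat (A : Tensor m n) : Matrix (Fin n) (Fin n) ℝ :=
  fun i j => if (j : ℕ) < (i : ℕ) then -maj A i j else 0

/-- `𝓛 = L𝓘`. -/
def Ltens (A : Tensor m n) : Tensor m n := mmul (Lmat A) (idT m n)

/-- `𝓕 = 𝓘 - 𝓛 - 𝒜`. -/
def Ftens (A : Tensor m n) : Tensor m n := idT m n - Ltens A - A

/-- The matrix `S_α^s`, with `(S_α^s)_{i,i+s} = -α_i a_{i(i+s)…(i+s)}`. -/
def Smat (A : Tensor m n) (α : Fin n → ℝ) (s : ℕ) : Matrix (Fin n) (Fin n) ℝ :=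
  fun i j => if (j : ℕ) = (i : ℕ) + s then -(α i * maj A i j) else 0

/-- The matrix `K_β^k`, with `(K_β^k)_{i,i-k} = -β_i a_{i(i-k)…(i-k)}`. -/
def Kmat (A : Tensor m n) (β : Fin n → ℝ) (k : ℕ) : Matrix (Fin n) (Fin n) ℝ :=
  fun i j => if (i : ℕ) = (j : ℕ) + k then -(β i * maj A i j) else 0

/-- The preconditioner `P_{αβ}(s,k) = I + S_α^s + K_β^k`. -/
def Pmat (A : Tensor m n) (α β : Fin n → ℝ) (s k : ℕ) : Matrix (Fin n) (Fin n) ℝ :=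
  1 + Smat A α s + Kmat A β k

/-- The preconditioned tensor `𝒜_{αβ}(s,k) = P_{αβ}(s,k) 𝒜`. -/
def precond (A : Tensor m n) (α β : Fin n → ℝ) (s k : ℕ) : Tensor m n :=
  mmul (Pmat A α β s k) A

/- Jacobi-type splittings. -/

def E1 (A : Tensor m n) (α β : Fin n → ℝ) (s k : ℕ) : Tensor m n :=
  mmul (Pmat A α β s k) (idT m n)

def F1 (A : Tensor m n) (α β : Fin n → ℝ) (s k : ℕ) : Tensor m n :=
  mmul (Pmat A α β s k) (Ltens A + Ftens A)

def F2 (A : Tensor m n) (α β : Fin n → ℝ) (s k : ℕ) : Tensor m n :=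
  mmul (Pmat A α β s k) (Ltens A + Ftens A) - mmul (Smat A α s + Kmat A β k) (idT m n)

def F3 (A : Tensor m n) (α : Fin n → ℝ) (s : ℕ) : Tensor m n :=
  mmul (1 + Smat A α s) (Ltens A + Ftens A) - mmul (Smat A α s) (idT m n)

def F4 (A : Tensor m n) (β : Fin n → ℝ) (k : ℕ) : Tensor m n :=
  mmul (1 + Kmat A β k) (Ltens A + Ftens A) - mmul (Kmat A β k) (idT m n)

/-- `S`: the matrix `S_α^1` with all parameters equal to `1`. -/
def Sfull (A : Tensor m n) : Matrix (Fin n) (Fin n) ℝ := Smat A (fun _ => 1) 1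

/-- `K`: the matrix `K_β^1` with all parameters equal to `1`. -/
def Kfull (A : Tensor m n) : Matrix (Fin n) (Fin n) ℝ := Kmat A (fun _ => 1) 1

/-- `𝓛′` with `𝓛 = K𝓘 + 𝓛′`. -/
def Lprime (A : Tensor m n) : Tensor m n := Ltens A - mmul (Kfull A) (idT m n)

/-- `𝓕′` with `𝓕 = S𝓘 + 𝓕′`. -/
def Fprime (A : Tensor m n) : Tensor m n := Ftens A - mmul (Sfull A) (idT m n)

/-- `ℰ₅ = (I - S_α K - K_β S)𝓘`. -/
def E5 (A : Tensor m n) (α β : Fin n → ℝ) : Tensor m n :=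
  mmul (1 - Smat A α 1 * Kfull A - Kmat A β 1 * Sfull A) (idT m n)

/-- `ℱ₅ = 𝓛 + 𝓕 - (S_α + K_β)𝓘 + S_α(𝓛′ + 𝓕) + K_β(𝓛 + 𝓕′)`. -/
def F5 (A : Tensor m n) (α β : Fin n → ℝ) : Tensor m n :=
  Ltens A + Ftens A - mmul (Smat A α 1 + Kmat A β 1) (idT m n)
    + mmul (Smat A α 1) (Lprime A + Ftens A) + mmul (Kmat A β 1) (Ltens A + Fprime A)

def finShiftUp (i : Fin n) (s : ℕ) (h : (i : ℕ) + s < n) : Fin n := ⟨(i : ℕ) + s, h⟩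

def finShiftDown (i : Fin n) (k : ℕ) : Fin n :=
  ⟨(i : ℕ) - k, lt_of_le_of_lt (Nat.sub_le _ _) i.isLt⟩

/-- The `i`-th quantity appearing in conditions (7) and (11):
`α_i a_{i(i+k)…(i+k)} a_{(i+k)i…i} + β_i a_{i(i-k)…(i-k)} a_{(i-k)i…i}`,
with each term dropped when its index is out of range. -/
def condExpr (A : Tensor m n) (α β : Fin n → ℝ) (k : ℕ) (i : Fin n) : ℝ :=
  (if h : (i : ℕ) + k < n then
      α i * maj A i (finShiftUp i k h) * maj A (finShiftUp i k h) i
    else 0) +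
  (if k ≤ (i : ℕ) then
      β i * maj A i (finShiftDown i k) * maj A (finShiftDown i k) i
    else 0)

/-- Conditions (7) (for `k = 1`) and (11) (for general `k = s`). -/
def Cond (A : Tensor m n) (α β : Fin n → ℝ) (k : ℕ) : Prop :=
  ∀ i : Fin n, 0 < condExpr A α β k i ∧ condExpr A α β k i < 1

/- Gauss–Seidel-type splittings. -/

/-- The diagonal part of `M(T)` as a matrix. -/
def DmatOf (T : Tensor m n) : Matrix (Fin n) (Fin n) ℝ :=
  fun i j => if i = j then maj T i j else 0

/-- The strictly lower triangular part of `M(T)` as a matrix. -/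
def LmatOf (T : Tensor m n) : Matrix (Fin n) (Fin n) ℝ :=
  fun i j => if (j : ℕ) < (i : ℕ) then maj T i j else 0

/-- `𝓓_α = D_α 𝓘` from `S_α^s 𝓛 = 𝓓_α + 𝓛_α + 𝓕_α`. -/
def Dalpha (A : Tensor m n) (α : Fin n → ℝ) (s : ℕ) : Tensor m n :=
  mmul (DmatOf (mmul (Smat A α s) (Ltens A))) (idT m n)

def Lalpha (A : Tensor m n) (α : Fin n → ℝ) (s : ℕ) : Tensor m n :=
  mmul (LmatOf (mmul (Smat A α s) (Ltens A))) (idT m n)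

def Falpha (A : Tensor m n) (α : Fin n → ℝ) (s : ℕ) : Tensor m n :=
  mmul (Smat A α s) (Ltens A) - Dalpha A α s - Lalpha A α s

/-- `𝓓_β = D_β 𝓘` from `K_β^k 𝓕 = 𝓓_β + 𝓛_β + 𝓕_β`. -/
def Dbeta (A : Tensor m n) (β : Fin n → ℝ) (k : ℕ) : Tensor m n :=
  mmul (DmatOf (mmul (Kmat A β k) (Ftens A))) (idT m n)

def Lbeta (A : Tensor m n) (β : Fin n → ℝ) (k : ℕ) : Tensor m n :=
  mmul (LmatOf (mmul (Kmat A β k) (Ftens A))) (idT m n)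

def Fbeta (A : Tensor m n) (β : Fin n → ℝ) (k : ℕ) : Tensor m n :=
  mmul (Kmat A β k) (Ftens A) - Dbeta A β k - Lbeta A β k

def M1 (A : Tensor m n) (α β : Fin n → ℝ) (s k : ℕ) : Tensor m n :=
  mmul (Pmat A α β s k) (idT m n - Ltens A)

def N1 (A : Tensor m n) (α β : Fin n → ℝ) (s k : ℕ) : Tensor m n :=
  mmul (Pmat A α β s k) (Ftens A)

def M2 (A : Tensor m n) (α β : Fin n → ℝ) (s k : ℕ) : Tensor m n :=
  idT m n - Ltens A + mmul (Kmat A β k) (idT m n) - mmul (Kmat A β k) (Ltens A)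
    - Dalpha A α s - Lalpha A α s - Dbeta A β k - Lbeta A β k

def N2 (A : Tensor m n) (α β : Fin n → ℝ) (s k : ℕ) : Tensor m n :=
  Ftens A - mmul (Smat A α s) (idT m n) + mmul (Smat A α s) (Ftens A)
    + Falpha A α s + Fbeta A β k

def M3 (A : Tensor m n) (α : Fin n → ℝ) (s : ℕ) : Tensor m n :=
  idT m n - Ltens A - Dalpha A α s - Lalpha A α s

def N3 (A : Tensor m n) (α : Fin n → ℝ) (s : ℕ) : Tensor m n :=
  Ftens A - mmul (Smat A α s) (idT m n) + mmul (Smat A α s) (Ftens A) + Falpha A α s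

def M4 (A : Tensor m n) (β : Fin n → ℝ) (k : ℕ) : Tensor m n :=
  mmul (1 + Kmat A β k) (idT m n - Ltens A) - Dbeta A β k - Lbeta A β k

def N4 (A : Tensor m n) (β : Fin n → ℝ) (k : ℕ) : Tensor m n :=
  Ftens A + Fbeta A β k

/- Preconditioned SOR. -/

def Dab (A : Tensor m n) (α β : Fin n → ℝ) (s k : ℕ) : Tensor m n :=
  idT m n - Dalpha A α s - Dbeta A β k

def Lab (A : Tensor m n) (α β : Fin n → ℝ) (s k : ℕ) : Tensor m n :=
  Ltens A - mmul (Kmat A β k) (idT m n) + mmul (Kmat A β k) (Ltens A)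
    + Lalpha A α s + Lbeta A β k

def Fab (A : Tensor m n) (α β : Fin n → ℝ) (s k : ℕ) : Tensor m n :=
  Ftens A - mmul (Smat A α s) (idT m n) + mmul (Smat A α s) (Ftens A)
    + Falpha A α s + Fbeta A β k

def Eomega (A : Tensor m n) (α β : Fin n → ℝ) (s k : ℕ) (ω : ℝ) : Tensor m n :=
  (1 / ω) • (Dab A α β s k - ω • Lab A α β s k)

def Fomega (A : Tensor m n) (α β : Fin n → ℝ) (s k : ℕ) (ω : ℝ) : Tensor m n :=
  (1 / ω) • ((1 - ω) • Dab A α β s k + ω • Fab A α β s k)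

/-- Preconditioned SOR iteration tensor `ℋ_{αβ}(ω)`. -/
def Hsor (A : Tensor m n) (α β : Fin n → ℝ) (s k : ℕ) (ω : ℝ) : Tensor m n :=
  mmul (maj (Eomega A α β s k ω))⁻¹ (Fomega A α β s k ω)

/-- Unpreconditioned SOR iteration tensor `ℋ(ω) = M(𝓘-ω𝓛)^{-1}((1-ω)𝓘+ω𝓕)`. -/
def Hu (A : Tensor m n) (ω : ℝ) : Tensor m n :=
  mmul (maj (idT m n - ω • Ltens A))⁻¹ ((1 - ω) • idT m n + ω • Ftens A)

/-- A tensor is reducible if there is a nonempty proper index subset `I` with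
`a_{i₁ i₂ … i_m} = 0` whenever `i₁ ∈ I` and `i₂, …, i_m ∉ I`. -/
def TReducible (A : Tensor m n) : Prop :=
  ∃ I : Set (Fin n), I.Nonempty ∧ I ≠ Set.univ ∧
    ∀ i f, i ∈ I → (∀ t, f t ∉ I) → A i f = 0
section Aux
variable {m n : ℕ}

lemma nonempty_index (m : ℕ) (hm : 2 ≤ m) : Nonempty (Fin (m - 1)) :=
  ⟨⟨0, by omega⟩⟩

lemma idT_apply_const (hm : 2 ≤ m) (l j : Fin n) :
    idT m n l (fun _ => j) = if j = l then 1 else 0 := by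
  have := nonempty_index m hm
  unfold idT
  by_cases h : j = l
  · simp [h]
  · rw [if_neg, if_neg h]
    intro hc
    exact h (hc (Classical.arbitrary _))

lemma idT_apply_nonconst {f : Fin (m-1) → Fin n} (hf : ∀ j, f ≠ fun _ => j) (l : Fin n) :
    idT m n l f = 0 := by
  unfold idT
  rw [if_neg]
  intro h
  exact hf l (funext h)

lemma tmul_idT (hm : 2 ≤ m) (y : Fin n → ℝ) (i : Fin n) :
    tmul (idT m n) y i = y i ^ (m - 1) := by
  unfold tmul
  rw [Finset.sum_eq_single (fun _ => i)]
  · simp [idT, Finset.prod_const, Finset.card_univ]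
  · intro f _ hf
    unfold idT
    rw [if_neg, zero_mul]
    intro h
    exact hf (funext h)
  · simp

lemma tmul_mmul (M : Matrix (Fin n) (Fin n) ℝ) (T : Tensor m n) (y : Fin n → ℝ) :
    tmul (mmul M T) y = M.mulVec (tmul T y) := by
  funext i
  unfold tmul mmul Matrix.mulVec dotProduct
  simp only [Finset.sum_mul, Finset.mul_sum, mul_assoc]
  rw [Finset.sum_comm]

lemma tmul_sub (T S : Tensor m n) (y : Fin n → ℝ) (i : Fin n) :
    tmul (T - S) y i = tmul T y i - tmul S y i := by
  unfold tmul
  rw [← Finset.sum_sub_distrib]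
  congr 1; funext f; simp [sub_mul]

lemma tmul_add (T S : Tensor m n) (y : Fin n → ℝ) (i : Fin n) :
    tmul (T + S) y i = tmul T y i + tmul S y i := by
  unfold tmul
  rw [← Finset.sum_add_distrib]
  congr 1; funext f; simp [add_mul]

lemma tmul_smul (c : ℝ) (T : Tensor m n) (y : Fin n → ℝ) (i : Fin n) :
    tmul (c • T) y i = c * tmul T y i := by
  unfold tmul
  rw [Finset.mul_sum]
  congr 1; funext f; simp [Pi.smul_apply, mul_assoc]

lemma tmul_nonneg {T : Tensor m n} (hT : TNonneg T) {y : Fin n → ℝ}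
    (hy : ∀ i, 0 ≤ y i) (i : Fin n) : 0 ≤ tmul T y i := by
  apply Finset.sum_nonneg
  intro f _
  exact mul_nonneg (hT i f) (Finset.prod_nonneg fun t _ => hy _)

lemma maj_mmul (M : Matrix (Fin n) (Fin n) ℝ) (T : Tensor m n) :
    maj (mmul M T) = M * maj T := by
  funext i j
  simp [maj, mmul, Matrix.mul_apply]

lemma maj_idT (hm : 2 ≤ m) : maj (idT m n) = 1 := by
  funext i j
  rw [maj, idT_apply_const hm]
  by_cases h : j = i
  · simp [h, Matrix.one_apply]
  · rw [if_neg h, Matrix.one_apply, if_neg (Ne.symm h)]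

lemma maj_sub (T S : Tensor m n) : maj (T - S) = maj T - maj S := rfl
lemma maj_add (T S : Tensor m n) : maj (T + S) = maj T + maj S := rfl

lemma mmul_one (T : Tensor m n) : mmul 1 T = T := by
  funext i f
  simp [mmul, Matrix.one_apply]

lemma mmul_addM (M N : Matrix (Fin n) (Fin n) ℝ) (T : Tensor m n) :
    mmul (M + N) T = mmul M T + mmul N T := by
  funext i f
  simp [mmul, add_mul, Finset.sum_add_distrib]

lemma mmul_sub (M : Matrix (Fin n) (Fin n) ℝ) (T S : Tensor m n) :
    mmul M (T - S) = mmul M T - mmul M S := by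
  funext i f
  simp [mmul, mul_sub, Finset.sum_sub_distrib]

lemma mmul_mul (M N : Matrix (Fin n) (Fin n) ℝ) (T : Tensor m n) :
    mmul (M * N) T = mmul M (mmul N T) := by
  funext i f
  unfold mmul
  simp only [Matrix.mul_apply, Finset.sum_mul, Finset.mul_sum, mul_assoc]
  rw [Finset.sum_comm]

lemma maj_Ltens (hm : 2 ≤ m) (A : Tensor m n) : maj (Ltens A) = Lmat A := by
  rw [Ltens, maj_mmul, maj_idT hm, mul_one]

end Aux
section Aux2
variable {m n : ℕ}

/-- Upper triangular nonneg matrix from `Ftens`. -/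
lemma maj_Ftens (hm : 2 ≤ m) (A : Tensor m n) (hdiag : UnitDiag A) (i j : Fin n) :
    maj (Ftens A) i j = if (i : ℕ) < (j : ℕ) then -(maj A i j) else 0 := by
  rw [Ftens, maj_sub, maj_sub, maj_idT hm, maj_Ltens hm]
  simp only [Matrix.sub_apply, Lmat, Matrix.one_apply]
  by_cases h : (i : ℕ) < (j : ℕ)
  · have hne : i ≠ j := by intro hc; subst hc; omega
    rw [if_neg hne, if_neg (by omega : ¬ (j:ℕ) < (i:ℕ)), if_pos h]
    ring
  · by_cases h2 : (j : ℕ) < (i : ℕ)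
    · have hne : i ≠ j := by intro hc; subst hc; omega
      rw [if_neg hne, if_pos h2, if_neg h]
      ring
    · have : i = j := by apply Fin.ext; omega
      subst this
      rw [if_pos rfl, if_neg h]
      have h3 : maj A i i = 1 := hdiag i
      rw [h3]; ring

/-- `mmul (Smat A α s) T` applied: only row `i+s` contributes. -/
lemma mmul_Smat_apply (A : Tensor m n) (α : Fin n → ℝ) (s : ℕ)
    (T : Tensor m n) (i : Fin n) (f : Fin (m-1) → Fin n) :
    mmul (Smat A α s) T i f =
      if h : (i : ℕ) + s < n then
        -(α i * maj A i ⟨(i:ℕ)+s, h⟩) * T ⟨(i:ℕ)+s, h⟩ f else 0 := by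
  unfold mmul Smat
  by_cases h : (i : ℕ) + s < n
  · rw [dif_pos h, Finset.sum_eq_single (⟨(i:ℕ)+s, h⟩ : Fin n)]
    · simp
    · intro l _ hl
      rw [if_neg, zero_mul]
      intro hc
      exact hl (by apply Fin.ext; simpa using hc)
    · simp
  · rw [dif_neg h]
    apply Finset.sum_eq_zero
    intro l _
    rw [if_neg, zero_mul]
    intro hc
    have := l.isLt
    omega

lemma mmul_Kmat_apply (A : Tensor m n) (β : Fin n → ℝ) (k : ℕ) (hk : 1 ≤ k)
    (T : Tensor m n) (i : Fin n) (f : Fin (m-1) → Fin n) :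
    mmul (Kmat A β k) T i f =
      if k ≤ (i : ℕ) then
        -(β i * maj A i (finShiftDown i k)) * T (finShiftDown i k) f else 0 := by
  unfold mmul Kmat
  by_cases h : k ≤ (i : ℕ)
  · rw [if_pos h, Finset.sum_eq_single (finShiftDown i k)]
    · rw [if_pos]
      simp [finShiftDown]
      omega
    · intro l _ hl
      rw [if_neg, zero_mul]
      intro hc
      exact hl (by apply Fin.ext; simp [finShiftDown]; omega)
    · simp
  · rw [if_neg h]
    apply Finset.sum_eq_zero
    intro l _
    rw [if_neg, zero_mul]
    intro hc
    have := l.isLt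
    omega

lemma Smat_mul_apply (A : Tensor m n) (α : Fin n → ℝ) (s : ℕ)
    (M : Matrix (Fin n) (Fin n) ℝ) (i j : Fin n) :
    (Smat A α s * M) i j =
      if h : (i : ℕ) + s < n then
        -(α i * maj A i ⟨(i:ℕ)+s, h⟩) * M ⟨(i:ℕ)+s, h⟩ j else 0 := by
  rw [Matrix.mul_apply]
  unfold Smat
  by_cases h : (i : ℕ) + s < n
  · rw [dif_pos h, Finset.sum_eq_single (⟨(i:ℕ)+s, h⟩ : Fin n)]
    · simp
    · intro l _ hl
      rw [if_neg, zero_mul]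
      intro hc
      exact hl (by apply Fin.ext; simpa using hc)
    · simp
  · rw [dif_neg h]
    apply Finset.sum_eq_zero
    intro l _
    rw [if_neg, zero_mul]
    intro hc
    have := l.isLt
    omega

lemma Kmat_mul_apply (A : Tensor m n) (β : Fin n → ℝ) (k : ℕ) (hk : 1 ≤ k)
    (M : Matrix (Fin n) (Fin n) ℝ) (i j : Fin n) :
    (Kmat A β k * M) i j =
      if k ≤ (i : ℕ) then
        -(β i * maj A i (finShiftDown i k)) * M (finShiftDown i k) j else 0 := by
  rw [Matrix.mul_apply]
  unfold Kmat
  by_cases h : k ≤ (i : ℕ)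
  · rw [if_pos h, Finset.sum_eq_single (finShiftDown i k)]
    · rw [if_pos]
      simp [finShiftDown]
      omega
    · intro l _ hl
      rw [if_neg, zero_mul]
      intro hc
      exact hl (by apply Fin.ext; simp [finShiftDown]; omega)
    · simp
  · rw [if_neg h]
    apply Finset.sum_eq_zero
    intro l _
    rw [if_neg, zero_mul]
    intro hc
    have := l.isLt
    omega

/-- Off-diagonal entries of a strong M-tensor are nonpositive. -/
lemma strongM_offdiag (hm : 2 ≤ m) {A : Tensor m n} (hA : StrongM A)
    (i : Fin n) (f : Fin (m-1) → Fin n) (hf : f ≠ fun _ => i) :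
    A i f ≤ 0 := by
  obtain ⟨η, B, hB, _, hAeq⟩ := hA
  have : A i f = η * idT m n i f - B i f := by rw [hAeq]; simp [idT]
  rw [this]
  have : idT m n i f = 0 := by
    unfold idT
    rw [if_neg]
    intro hc
    exact hf (funext hc)
  rw [this, mul_zero, zero_sub, neg_nonpos]
  exact hB i f

lemma strongM_maj_offdiag (hm : 2 ≤ m) {A : Tensor m n} (hA : StrongM A)
    {i j : Fin n} (hij : j ≠ i) : maj A i j ≤ 0 := by
  apply strongM_offdiag hm hA
  intro hc
  have := nonempty_index m hm
  exact hij (congrFun hc (Classical.arbitrary _))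

/-- Off-"diagonal" entries are `-B i f`, hence `Ftens` is nonnegative. -/
lemma Ftens_nonneg (hm : 2 ≤ m) {A : Tensor m n} (hA : StrongM A) (hdiag : UnitDiag A)
    (i : Fin n) (f : Fin (m-1) → Fin n) : 0 ≤ Ftens A i f := by
  by_cases hc : ∃ j, f = fun _ => j
  · obtain ⟨j, rfl⟩ := hc
    have h1 : Ftens A i (fun _ => j) = maj (Ftens A) i j := rfl
    rw [h1, maj_Ftens hm A hdiag]
    by_cases h : (i:ℕ) < (j:ℕ)
    · rw [if_pos h, neg_nonneg]
      exact strongM_maj_offdiag hm hA (by intro hc; subst hc; omega)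
    · rw [if_neg h]
  · push_neg at hc
    have h0 : idT m n i f = 0 := idT_apply_nonconst hc i
    have h1 : Ltens A i f = 0 := by
      unfold Ltens mmul
      apply Finset.sum_eq_zero
      intro l _
      rw [idT_apply_nonconst hc l, mul_zero]
    have h2 : Ftens A i f = - A i f := by
      unfold Ftens
      simp [h0, h1]
    rw [h2, neg_nonneg]
    apply strongM_offdiag hm hA
    exact hc i

end Aux2
section Aux3
variable {n : ℕ}

/-- Strictly-lower-triangular nonnegative matrices are nilpotent with explicit
nonnegative geometric inverse for `1 - N`; packaged for a lower triangular
Z-matrix `C` with positive diagonal. -/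
lemma lower_tri_inverse (hn : 1 ≤ n) (C : Matrix (Fin n) (Fin n) ℝ)
    (hup : ∀ i j : Fin n, (i : ℕ) < (j : ℕ) → C i j = 0)
    (hdiag : ∀ i, 0 < C i i)
    (hlow : ∀ i j : Fin n, (j : ℕ) < (i : ℕ) → C i j ≤ 0) :
    ∃ G : Matrix (Fin n) (Fin n) ℝ,
      C * G = 1 ∧ G * C = 1 ∧ (∀ i j, 0 ≤ G i j) ∧ (∀ i, 0 < G i i) := by
  classical
  set D : Matrix (Fin n) (Fin n) ℝ := Matrix.diagonal (fun i => C i i) with hD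
  set Dinv : Matrix (Fin n) (Fin n) ℝ := Matrix.diagonal (fun i => (C i i)⁻¹) with hDinv
  have hDD : D * Dinv = 1 := by
    rw [hD, hDinv, Matrix.diagonal_mul_diagonal]
    ext i j
    by_cases h : i = j <;>
      simp [Matrix.diagonal, Matrix.one_apply, h, mul_inv_cancel₀ (ne_of_gt (hdiag j))]
  have hDD' : Dinv * D = 1 := by
    rw [hD, hDinv, Matrix.diagonal_mul_diagonal]
    ext i j
    by_cases h : i = j <;>
      simp [Matrix.diagonal, Matrix.one_apply, h, inv_mul_cancel₀ (ne_of_gt (hdiag j))]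
  set N : Matrix (Fin n) (Fin n) ℝ := Dinv * (D - C) with hN
  have hNapp : ∀ i j, N i j = (C i i)⁻¹ * (D - C) i j := by
    intro i j
    rw [hN, Matrix.mul_apply]
    rw [Finset.sum_eq_single i]
    · simp [hDinv, Matrix.diagonal]
    · intro l _ hl
      simp [hDinv, Matrix.diagonal_apply_ne' _ hl]
    · simp
  have hEnn : ∀ i j, 0 ≤ (D - C) i j := by
    intro i j
    rcases lt_trichotomy ((i:ℕ)) ((j:ℕ)) with h | h | h
    · have hne : i ≠ j := by intro hc; subst hc; omega
      simp [hD, Matrix.sub_apply, Matrix.diagonal_apply_ne _ hne, hup i j h]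
    · have : i = j := Fin.ext h
      subst this
      simp [hD, Matrix.sub_apply, Matrix.diagonal]
    · have hne : i ≠ j := by intro hc; subst hc; omega
      have := hlow i j h
      simp only [hD, Matrix.sub_apply, Matrix.diagonal_apply_ne _ hne]
      linarith
  have hEzero : ∀ i j : Fin n, ¬ ((j:ℕ) < (i:ℕ)) → (D - C) i j = 0 := by
    intro i j h
    rcases lt_trichotomy ((i:ℕ)) ((j:ℕ)) with h2 | h2 | h2
    · have hne : i ≠ j := by intro hc; subst hc; omega
      simp [hD, Matrix.sub_apply, Matrix.diagonal_apply_ne _ hne, hup i j h2]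
    · have : i = j := Fin.ext h2
      subst this
      simp [hD, Matrix.sub_apply, Matrix.diagonal]
    · exact absurd h2 h
  have hNnn : ∀ i j, 0 ≤ N i j := by
    intro i j
    rw [hNapp]
    exact mul_nonneg (inv_nonneg.mpr (le_of_lt (hdiag i))) (hEnn i j)
  have hNzero : ∀ i j : Fin n, ¬ ((j:ℕ) < (i:ℕ)) → N i j = 0 := by
    intro i j h
    rw [hNapp, hEzero i j h, mul_zero]
  -- powers vanish
  have hpow : ∀ p : ℕ, ∀ i j : Fin n, (i:ℕ) < (j:ℕ) + p → (N ^ p) i j = 0 := by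
    intro p
    induction p with
    | zero =>
      intro i j h
      rw [pow_zero]
      have : i ≠ j := by intro hc; subst hc; omega
      exact Matrix.one_apply_ne this
    | succ p ih =>
      intro i j h
      rw [pow_succ', Matrix.mul_apply]
      apply Finset.sum_eq_zero
      intro l _
      by_cases hl : (l:ℕ) < (i:ℕ)
      · rw [ih l j (by omega), mul_zero]
      · rw [hNzero i l hl, zero_mul]
  have hNn : N ^ n = 0 := by
    ext i j
    rw [hpow n i j (by have := i.isLt; omega)]
    simp
  have hpownn : ∀ p : ℕ, ∀ i j, 0 ≤ (N ^ p) i j := by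
    intro p
    induction p with
    | zero =>
      intro i j
      by_cases h : i = j <;> simp [h, Matrix.one_apply]
    | succ p ih =>
      intro i j
      rw [pow_succ, Matrix.mul_apply]
      exact Finset.sum_nonneg fun l _ => mul_nonneg (ih i l) (hNnn l j)
  set Geo : Matrix (Fin n) (Fin n) ℝ := ∑ p ∈ Finset.range n, N ^ p with hGeo
  set G : Matrix (Fin n) (Fin n) ℝ := Geo * Dinv with hG
  have hgeom : (1 - N) * Geo = 1 := by
    have h := mul_geom_sum N n
    rw [hGeo]
    have h2 : (1 - N) * ∑ p ∈ Finset.range n, N ^ p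
        = -((N - 1) * ∑ p ∈ Finset.range n, N ^ p) := by
      rw [← neg_mul]; congr 1; abel
    rw [h2, h, hNn]
    abel
  have hgeom' : Geo * (1 - N) = 1 := by
    have h := geom_sum_mul N n
    rw [hGeo]
    have h2 : (∑ p ∈ Finset.range n, N ^ p) * (1 - N)
        = -((∑ p ∈ Finset.range n, N ^ p) * (N - 1)) := by
      rw [← mul_neg]; congr 1; abel
    rw [h2, h, hNn]
    abel
  have hCform : C = D * (1 - N) := by
    rw [Matrix.mul_sub, Matrix.mul_one, hN, ← Matrix.mul_assoc, hDD, Matrix.one_mul]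
    abel
  refine ⟨G, ?_, ?_, ?_, ?_⟩
  · rw [hG, hCform, Matrix.mul_assoc, ← Matrix.mul_assoc (1 - N), hgeom, Matrix.one_mul, hDD]
  · rw [hG, hCform, Matrix.mul_assoc, ← Matrix.mul_assoc Dinv, hDD', Matrix.one_mul, hgeom']
  · intro i j
    rw [hG, Matrix.mul_apply]
    apply Finset.sum_nonneg
    intro l _
    apply mul_nonneg
    · rw [hGeo]
      simp only [Matrix.sum_apply]
      exact Finset.sum_nonneg fun p _ => hpownn p i l
    · rcases eq_or_ne l j with rfl | hne
      · simp [hDinv, Matrix.diagonal, inv_nonneg.mpr (le_of_lt (hdiag l))]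
      · simp [hDinv, Matrix.diagonal_apply_ne _ hne]
  · intro i
    rw [hG, Matrix.mul_apply, Finset.sum_eq_single i]
    · have h0 : (0:ℝ) < Dinv i i := by
        simp [hDinv, Matrix.diagonal, inv_pos.mpr (hdiag i)]
      apply mul_pos _ h0
      rw [hGeo]
      simp only [Matrix.sum_apply]
      have h1 : ∀ p ∈ Finset.range n, 0 ≤ (N ^ p) i i := fun p _ => hpownn p i i
      have h2 : (0:ℕ) ∈ Finset.range n := by simp; omega
      calc (0:ℝ) < (N ^ 0) i i := by simp [Matrix.one_apply]
        _ ≤ ∑ p ∈ Finset.range n, (N ^ p) i i := by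
            apply Finset.single_le_sum h1 h2
    · intro l _ hl
      have h0 : Dinv l i = 0 := Matrix.diagonal_apply_ne _ hl
      rw [h0, mul_zero]
    · simp
end Aux3
section Aux4
variable {m n : ℕ}

lemma tmul_smul_arg (hm : 2 ≤ m) (T : Tensor m n) (c : ℝ) (y : Fin n → ℝ) (i : Fin n) :
    tmul T (c • y) i = c ^ (m - 1) * tmul T y i := by
  unfold tmul
  rw [Finset.mul_sum]
  apply Finset.sum_congr rfl
  intro f _
  have : ∏ t, (c • y) (f t) = c ^ (m - 1) * ∏ t, y (f t) := by
    simp [Pi.smul_apply, smul_eq_mul, Finset.prod_mul_distrib, Finset.prod_const,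
      Finset.card_univ]
  rw [this]; ring

lemma tmul_mono {T : Tensor m n} (hT : TNonneg T) {y z : Fin n → ℝ}
    (hy : ∀ i, 0 ≤ y i) (hyz : ∀ i, y i ≤ z i) (i : Fin n) :
    tmul T y i ≤ tmul T z i := by
  apply Finset.sum_le_sum
  intro f _
  apply mul_le_mul_of_nonneg_left _ (hT i f)
  exact Finset.prod_le_prod (fun t _ => hy _) (fun t _ => hyz _)

lemma tmul_entry_mono {T S : Tensor m n} (hTS : ∀ i f, T i f ≤ S i f)
    {y : Fin n → ℝ} (hy : ∀ i, 0 ≤ y i) (i : Fin n) :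
    tmul T y i ≤ tmul S y i := by
  apply Finset.sum_le_sum
  intro f _
  exact mul_le_mul_of_nonneg_right (hTS i f) (Finset.prod_nonneg fun t _ => hy _)

lemma tmul_continuous (T : Tensor m n) (i : Fin n) :
    Continuous fun y : Fin n → ℝ => tmul T y i := by
  apply continuous_finset_sum
  intro f _
  exact continuous_const.mul (continuous_finset_prod _ fun t _ => continuous_apply _)

lemma tmul_add_const (hm : 2 ≤ m) (B : Tensor m n) (c : ℝ) (z : Fin n → ℝ) (j : Fin n) :
    tmul (fun i f => B i f + c) z j = tmul B z j + c * (∑ i, z i) ^ (m - 1) := by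
  unfold tmul
  have hpow : (∑ i, z i) ^ (m - 1) = ∑ f : Fin (m-1) → Fin n, ∏ t, z (f t) := by
    have h1 : (∑ i, z i) ^ (m - 1) = ∏ _t : Fin (m-1), (∑ i, z i) := by
      rw [Finset.prod_const, Finset.card_univ, Fintype.card_fin]
    rw [h1, Finset.prod_univ_sum]
    rw [← Fintype.piFinset_univ]
  rw [hpow, Finset.mul_sum, ← Finset.sum_add_distrib]
  apply Finset.sum_congr rfl
  intro f _
  ring

lemma tmulC_ofReal (B : Tensor m n) (z : Fin n → ℝ) (i : Fin n) :
    tmulC B (fun j => (z j : ℂ)) i = ((tmul B z i : ℝ) : ℂ) := by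
  unfold tmulC tmul
  push_cast
  rfl

/-- Every eigenvalue modulus is bounded by a "ratio bound" coming from a
positive test vector. -/
lemma eig_le_ratio (hm : 2 ≤ m) (hn : 1 ≤ n) (T : Tensor m n) (hT : TNonneg T)
    (y : Fin n → ℝ) (hy : ∀ i, 0 < y i) (θ : ℝ)
    (hθ : ∀ i, tmul T y i ≤ θ * y i ^ (m - 1)) :
    ∀ lam : ℂ, IsEigenvalue T lam → ‖lam‖ ≤ θ := by
  intro lam hlam
  obtain ⟨x, hx0, heq⟩ := hlam
  haveI : Nonempty (Fin n) := Fin.pos_iff_nonempty.mp (by omega)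
  set u : Fin n → ℝ := fun i => ‖x i‖ with hu
  obtain ⟨i0, -, hi0⟩ := Finset.exists_max_image Finset.univ (fun i => u i / y i)
    ⟨Classical.arbitrary _, Finset.mem_univ _⟩
  set c : ℝ := u i0 / y i0 with hc
  have hcnn : 0 ≤ c := div_nonneg (norm_nonneg _) (hy i0).le
  have hub : ∀ j, u j ≤ c * y j := by
    intro j
    have := hi0 j (Finset.mem_univ j)
    rw [div_le_iff₀ (hy j)] at this
    simpa [mul_comm] using this
  have hc0 : 0 < c := by
    rcases Function.ne_iff.mp hx0 with ⟨j, hj⟩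
    have huj : 0 < u j := by simpa [hu] using (norm_pos_iff.mpr hj)
    have := hub j
    nlinarith [hy j]
  have hui0 : u i0 = c * y i0 := by
    rw [hc, div_mul_cancel₀ _ (ne_of_gt (hy i0))]
  have key : ‖lam‖ * u i0 ^ (m - 1) ≤ c ^ (m-1) * (θ * y i0 ^ (m - 1)) := by
    have h1 : ‖tmulC T x i0‖ = ‖lam‖ * u i0 ^ (m - 1) := by
      rw [heq i0, norm_mul, norm_pow]
    have h2 : ‖tmulC T x i0‖ ≤ tmul T u i0 := by
      refine le_trans (norm_sum_le _ _) ?_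
      apply Finset.sum_le_sum
      intro f _
      rw [norm_mul, norm_prod]
      rw [Complex.norm_real, Real.norm_eq_abs, abs_of_nonneg (hT i0 f)]
    have h3 : tmul T u i0 ≤ c ^ (m-1) * tmul T y i0 := by
      have : tmul T u i0 ≤ tmul T (c • y) i0 := by
        apply tmul_mono hT (fun i => norm_nonneg _) (fun i => by
          simpa [Pi.smul_apply, smul_eq_mul] using hub i)
      rwa [tmul_smul_arg hm] at this
    calc ‖lam‖ * u i0 ^ (m-1) = ‖tmulC T x i0‖ := h1.symm
      _ ≤ tmul T u i0 := h2
      _ ≤ c ^ (m-1) * tmul T y i0 := h3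
      _ ≤ c ^ (m-1) * (θ * y i0 ^ (m-1)) := by
          apply mul_le_mul_of_nonneg_left (hθ i0) (pow_nonneg hcnn _)
  rw [hui0, mul_pow] at key
  have hpos : 0 < c ^ (m-1) * y i0 ^ (m-1) :=
    mul_pos (pow_pos hc0 _) (pow_pos (hy i0) _)
  nlinarith [key, hpos]

/-- A normalized feasible ratio is bounded by the max row sum. -/
lemma ratio_le (hm : 2 ≤ m) (hn : 1 ≤ n) (P : Tensor m n) (hP : TNonneg P)
    (t : ℝ) (z : Fin n → ℝ) (hz : ∀ i, 0 ≤ z i) (hzsum : (∑ i, z i) = 1)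
    (hfeas : ∀ i, t * z i ^ (m - 1) ≤ tmul P z i) :
    t ≤ Finset.univ.sup' (by
      haveI : Nonempty (Fin n) := Fin.pos_iff_nonempty.mp (by omega)
      exact Finset.univ_nonempty) (fun i => ∑ f : Fin (m-1) → Fin n, P i f) := by
  haveI : Nonempty (Fin n) := Fin.pos_iff_nonempty.mp (by omega)
  obtain ⟨i0, -, hi0⟩ := Finset.exists_max_image Finset.univ z
    ⟨Classical.arbitrary _, Finset.mem_univ _⟩
  have hzi0 : 0 < z i0 := by
    by_contra h
    push_neg at h
    have : ∀ j, z j = 0 := fun j => le_antisymm (le_trans (hi0 j (Finset.mem_univ j)) h) (hz j)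
    rw [Finset.sum_congr rfl (fun j _ => this j)] at hzsum
    simp at hzsum
  have h1 : tmul P z i0 ≤ (∑ f : Fin (m-1) → Fin n, P i0 f) * z i0 ^ (m - 1) := by
    rw [Finset.sum_mul]
    apply Finset.sum_le_sum
    intro f _
    apply mul_le_mul_of_nonneg_left _ (hP i0 f)
    calc ∏ t, z (f t) ≤ ∏ t : Fin (m-1), z i0 :=
          Finset.prod_le_prod (fun t _ => hz _) (fun t _ => hi0 _ (Finset.mem_univ _))
      _ = z i0 ^ (m-1) := by simp [Finset.prod_const, Finset.card_univ]
  have h2 := le_trans (hfeas i0) h1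
  have h3 : t ≤ ∑ f : Fin (m-1) → Fin n, P i0 f := by
    have hp : 0 < z i0 ^ (m-1) := pow_pos hzi0 _
    nlinarith
  exact le_trans h3 (Finset.le_sup'
    (fun i => ∑ f : Fin (m-1) → Fin n, P i f) (Finset.mem_univ i0))

lemma bddAbove_eigs (hm : 2 ≤ m) (hn : 1 ≤ n) (B : Tensor m n) (hB : TNonneg B) :
    BddAbove {r : ℝ | ∃ lam : ℂ, IsEigenvalue B lam ∧ r = ‖lam‖} := by
  haveI : Nonempty (Fin n) := Fin.pos_iff_nonempty.mp (by omega)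
  refine ⟨Finset.univ.sup' Finset.univ_nonempty (fun i => ∑ f : Fin (m-1) → Fin n, B i f), ?_⟩
  rintro r ⟨lam, hlam, rfl⟩
  apply eig_le_ratio hm hn B hB (fun _ => 1) (fun _ => one_pos) _ _ lam hlam
  intro i
  simp only [tmul, Finset.prod_const_one, mul_one, one_pow]
  exact Finset.le_sup'
    (fun i => ∑ f : Fin (m-1) → Fin n, B i f) (Finset.mem_univ i)

end Aux4
section Aux5
variable {m n : ℕ}

lemma tmul_bump (hm : 2 ≤ m) {P : Tensor m n} {ε : ℝ} (hε : 0 < ε)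
    (hP : ∀ i f, ε ≤ P i f) {z : Fin n → ℝ} (hz : ∀ i, 0 ≤ z i)
    (i0 : Fin n) {δ : ℝ} (hδ : 0 ≤ δ) (j : Fin n) :
    tmul P z j + ε * δ ^ (m - 1) ≤
      tmul P (fun l => z l + if l = i0 then δ else 0) j := by
  classical
  set z' : Fin n → ℝ := fun l => z l + if l = i0 then δ else 0 with hz'
  have hzle : ∀ l, z l ≤ z' l := by
    intro l
    rw [hz']
    by_cases h : l = i0 <;> simp [h, hδ]
  have hz'nn : ∀ l, 0 ≤ z' l := fun l => le_trans (hz l) (hzle l)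
  have hPnn : TNonneg P := fun i f => le_trans hε.le (hP i f)
  set c0 : Fin (m-1) → Fin n := fun _ => i0 with hc0
  have hmem : c0 ∈ (Finset.univ : Finset (Fin (m-1) → Fin n)) := Finset.mem_univ _
  have split1 : tmul P z' j = P j c0 * ∏ t, z' (c0 t)
      + ∑ f ∈ Finset.univ.erase c0, P j f * ∏ t, z' (f t) := by
    unfold tmul
    rw [← Finset.add_sum_erase _ _ hmem]
  have split2 : tmul P z j = P j c0 * ∏ t, z (c0 t)
      + ∑ f ∈ Finset.univ.erase c0, P j f * ∏ t, z (f t) := by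
    unfold tmul
    rw [← Finset.add_sum_erase _ _ hmem]
  have hterm : P j c0 * ∏ t, z (c0 t) + ε * δ ^ (m-1) ≤ P j c0 * ∏ t, z' (c0 t) := by
    have h1 : ∏ t, z' (c0 t) = (z i0 + δ) ^ (m - 1) := by
      simp [hc0, hz', Finset.prod_const, Finset.card_univ]
    have h2 : ∏ t, z (c0 t) = z i0 ^ (m - 1) := by
      simp [hc0, Finset.prod_const, Finset.card_univ]
    rw [h1, h2]
    have h3 : z i0 ^ (m-1) + δ ^ (m-1) ≤ (z i0 + δ) ^ (m-1) :=
      pow_add_pow_le (hz i0) hδ (by omega)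
    have h4 : P j c0 * (z i0 ^ (m-1) + δ ^ (m-1)) ≤ P j c0 * (z i0 + δ) ^ (m-1) :=
      mul_le_mul_of_nonneg_left h3 (hPnn j c0)
    have h5 : ε * δ ^ (m-1) ≤ P j c0 * δ ^ (m-1) :=
      mul_le_mul_of_nonneg_right (hP j c0) (pow_nonneg hδ _)
    nlinarith
  have hrest : ∑ f ∈ Finset.univ.erase c0, P j f * ∏ t, z (f t)
      ≤ ∑ f ∈ Finset.univ.erase c0, P j f * ∏ t, z' (f t) := by
    apply Finset.sum_le_sum
    intro f _
    apply mul_le_mul_of_nonneg_left _ (hPnn j f)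
    exact Finset.prod_le_prod (fun t _ => hz _) (fun t _ => hzle _)
  rw [split1, split2]
  linarith

lemma perron (hm : 2 ≤ m) (hn : 1 ≤ n) (P : Tensor m n) (ε : ℝ) (hε : 0 < ε)
    (hP : ∀ i f, ε ≤ P i f) :
    ∃ (lam : ℝ) (z : Fin n → ℝ), 0 < lam ∧ (∀ i, 0 < z i) ∧ (∑ i, z i) = 1 ∧
      (∀ i, tmul P z i = lam * z i ^ (m - 1)) := by
  classical
  haveI : Nonempty (Fin n) := Fin.pos_iff_nonempty.mp (by omega)
  have hPnn : TNonneg P := fun i f => le_trans hε.le (hP i f)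
  have hm1 : m - 1 ≠ 0 := by omega
  set Λ : Set ℝ := {t : ℝ | ∃ z : Fin n → ℝ, (∀ i, 0 ≤ z i) ∧ (∑ i, z i) = 1 ∧
    ∀ i, t * z i ^ (m - 1) ≤ tmul P z i} with hΛ
  have hn0 : ((n:ℝ)) ≠ 0 := by positivity
  have h0Λ : (0:ℝ) ∈ Λ := by
    refine ⟨fun _ => (n:ℝ)⁻¹, fun i => by positivity, ?_, ?_⟩
    · simp [Finset.sum_const, Finset.card_univ]
      field_simp
    · intro i
      rw [zero_mul]
      exact tmul_nonneg hPnn (fun i => by positivity) i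
  have hbdd : BddAbove Λ := by
    refine ⟨Finset.univ.sup' Finset.univ_nonempty
      (fun i => ∑ f : Fin (m-1) → Fin n, P i f), ?_⟩
    rintro t ⟨z, hz, hzsum, hfeas⟩
    exact ratio_le hm hn P hPnn t z hz hzsum hfeas
  set lam : ℝ := sSup Λ with hlam
  have hlam0 : 0 ≤ lam := le_csSup hbdd h0Λ
  -- approximating sequence
  have hseq : ∀ j : ℕ, ∃ t, t ∈ Λ ∧ lam - 1/(j+1) < t := by
    intro j
    have : lam - 1/(j+1) < lam := by
      have : (0:ℝ) < 1/(j+1) := by positivity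
      linarith
    obtain ⟨t, htΛ, hlt⟩ := exists_lt_of_lt_csSup ⟨0, h0Λ⟩ this
    exact ⟨t, htΛ, hlt⟩
  choose tseq htΛ htgt using hseq
  have htle : ∀ j, tseq j ≤ lam := fun j => le_csSup hbdd (htΛ j)
  choose zs hzs0 hzssum hzsfeas using htΛ
  -- subsequence converging
  have hmem : ∀ j, zs j ∈ Metric.closedBall (0 : Fin n → ℝ) 1 := by
    intro j
    rw [Metric.mem_closedBall, dist_zero_right]
    apply pi_norm_le_iff_of_nonneg zero_le_one |>.mpr
    intro i
    rw [Real.norm_eq_abs, abs_of_nonneg (hzs0 j i)]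
    calc zs j i ≤ ∑ l, zs j l :=
          Finset.single_le_sum (fun l _ => hzs0 j l) (Finset.mem_univ i)
      _ = 1 := hzssum j
  obtain ⟨zbar, -, φ, hφmono, hφtend⟩ :=
    tendsto_subseq_of_bounded Metric.isBounded_closedBall hmem
  have htendi : ∀ i, Filter.Tendsto (fun j => zs (φ j) i) Filter.atTop (nhds (zbar i)) :=
    fun i => ((continuous_apply i).tendsto zbar).comp hφtend
  have hzbar0 : ∀ i, 0 ≤ zbar i :=
    fun i => ge_of_tendsto (htendi i) (Filter.Eventually.of_forall fun j => hzs0 _ i)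
  have hzbarsum : (∑ i, zbar i) = 1 := by
    have h1 : Filter.Tendsto (fun j => ∑ i, zs (φ j) i) Filter.atTop (nhds (∑ i, zbar i)) :=
      tendsto_finset_sum _ (fun i _ => htendi i)
    have h2 : (fun j => ∑ i, zs (φ j) i) = fun _ => (1:ℝ) := funext fun j => hzssum (φ j)
    rw [h2] at h1
    exact (tendsto_nhds_unique tendsto_const_nhds h1).symm
  have httend : Filter.Tendsto (fun j => tseq (φ j)) Filter.atTop (nhds lam) := by
    apply tendsto_of_tendsto_of_tendsto_of_le_of_le
      (g := fun j : ℕ => lam - 1/(j+1)) (h := fun _ => lam)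
    · have := tendsto_one_div_add_atTop_nhds_zero_nat (𝕜 := ℝ)
      have h2 : Filter.Tendsto (fun j : ℕ => lam - 1/(j+1)) Filter.atTop (nhds (lam - 0)) :=
        Filter.Tendsto.sub tendsto_const_nhds this
      simpa using h2
    · exact tendsto_const_nhds
    · intro j
      have h1 := htgt (φ j)
      have h2 : (1:ℝ)/(φ j + 1) ≤ 1/(j+1) := by
        apply one_div_le_one_div_of_le (by positivity)
        have h5 : j ≤ φ j := hφmono.le_apply
        have h6 : (j:ℝ) ≤ (φ j : ℝ) := Nat.cast_le.mpr h5
        push_cast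
        linarith
      linarith
    · exact fun j => htle (φ j)
  have hfeas : ∀ i, lam * zbar i ^ (m - 1) ≤ tmul P zbar i := by
    intro i
    apply le_of_tendsto_of_tendsto' (Filter.Tendsto.mul httend ((htendi i).pow (m-1)))
      (((tmul_continuous P i).tendsto zbar).comp hφtend)
    exact fun j => hzsfeas (φ j) i
  -- equality via bump argument
  have heq : ∀ i, tmul P zbar i = lam * zbar i ^ (m - 1) := by
    by_contra hcon
    push_neg at hcon
    obtain ⟨iS, hiS⟩ := hcon
    have hgt : lam * zbar iS ^ (m-1) < tmul P zbar iS := lt_of_le_of_ne (hfeas iS) (Ne.symm hiS)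
    -- choose δ
    set hfun : ℝ → ℝ := fun δ => (lam + ε * δ ^ (m-1)) * (zbar iS + δ) ^ (m-1) with hhfun
    have hcont : Continuous hfun := by
      apply Continuous.mul
      · exact continuous_const.add (continuous_const.mul (continuous_pow _))
      · exact (continuous_const.add continuous_id).pow _
    have hh0 : hfun 0 < tmul P zbar iS := by
      rw [hhfun]
      simp only [zero_pow hm1, mul_zero, add_zero]
      simpa using hgt
    have hev : ∀ᶠ δ in nhds (0:ℝ), hfun δ < tmul P zbar iS :=
      (hcont.tendsto 0).eventually_lt_const hh0
    obtain ⟨r, hr, hball⟩ := Metric.eventually_nhds_iff.mp hev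
    set δ : ℝ := r/2 with hδdef
    have hδpos : 0 < δ := by positivity
    have hδlt : hfun δ < tmul P zbar iS := by
      apply hball
      rw [Real.dist_eq, hδdef]
      rw [sub_zero, abs_of_pos (by positivity)]
      linarith
    set z' : Fin n → ℝ := fun l => zbar l + if l = iS then δ else 0 with hz'
    have hz'nn : ∀ l, 0 ≤ z' l := by
      intro l
      have hl : z' l = zbar l + if l = iS then δ else 0 := rfl
      rw [hl]
      split_ifs with h
      · linarith [hzbar0 l, hδpos]
      · simp [hzbar0 l]
    have hzlez' : ∀ l, zbar l ≤ z' l := by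
      intro l
      have hl : z' l = zbar l + if l = iS then δ else 0 := rfl
      rw [hl]
      split_ifs with h
      · linarith [hδpos]
      · simp
    set t' : ℝ := lam + ε * δ ^ (m-1) with ht'
    have ht'gt : lam < t' := by
      have : (0:ℝ) < ε * δ ^ (m-1) := by positivity
      linarith
    have hfeas' : ∀ l, t' * z' l ^ (m-1) ≤ tmul P z' l := by
      intro l
      by_cases h : l = iS
      · subst h
        have h1 : z' l = zbar l + δ := by rw [hz']; simp
        rw [h1]
        calc t' * (zbar l + δ) ^ (m-1) = hfun δ := by rw [hhfun, ht']
          _ ≤ tmul P zbar l := hδlt.le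
          _ ≤ tmul P z' l := tmul_mono hPnn hzbar0 hzlez' l
      · have h1 : z' l = zbar l := by rw [hz']; simp [h]
        rw [h1]
        have h2 : zbar l ≤ 1 := by
          rw [← hzbarsum]
          exact Finset.single_le_sum (fun i _ => hzbar0 i) (Finset.mem_univ l)
        have h3 : zbar l ^ (m-1) ≤ 1 := pow_le_one₀ (hzbar0 l) h2
        calc t' * zbar l ^ (m-1) = lam * zbar l ^ (m-1) + ε * δ^(m-1) * zbar l ^ (m-1) := by
              rw [ht']; ring
          _ ≤ tmul P zbar l + ε * δ^(m-1) * 1 := by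
              have := hfeas l
              have h4 : ε * δ^(m-1) * zbar l ^ (m-1) ≤ ε * δ^(m-1) * 1 :=
                mul_le_mul_of_nonneg_left h3 (by positivity)
              linarith
          _ = tmul P zbar l + ε * δ^(m-1) := by ring
          _ ≤ tmul P z' l := tmul_bump hm hε hP hzbar0 iS hδpos.le l
    -- normalize z'
    set σ : ℝ := ∑ l, z' l with hσ
    have hσpos : 0 < σ := by
      have h1 : (1:ℝ) ≤ σ := by
        rw [hσ, ← hzbarsum]
        exact Finset.sum_le_sum fun l _ => hzlez' l
      linarith
    have ht'Λ : t' ∈ Λ := by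
      refine ⟨σ⁻¹ • z', fun i => by
        have h := hz'nn i
        have h2 : (0:ℝ) ≤ σ⁻¹ := inv_nonneg.mpr hσpos.le
        simpa [Pi.smul_apply, smul_eq_mul] using mul_nonneg h2 h, ?_, ?_⟩
      · simp only [Pi.smul_apply, smul_eq_mul]
        rw [← Finset.mul_sum, ← hσ]
        field_simp
      · intro i
        rw [tmul_smul_arg hm]
        have h1 : (σ⁻¹ • z') i ^ (m-1) = (σ⁻¹)^(m-1) * z' i ^ (m-1) := by
          simp [Pi.smul_apply, smul_eq_mul, mul_pow]
        rw [h1]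
        have h2 : (0:ℝ) ≤ (σ⁻¹)^(m-1) := by positivity
        calc t' * ((σ⁻¹)^(m-1) * z' i ^ (m-1)) = (σ⁻¹)^(m-1) * (t' * z' i ^ (m-1)) := by ring
          _ ≤ (σ⁻¹)^(m-1) * tmul P z' i := mul_le_mul_of_nonneg_left (hfeas' i) h2
    have := le_csSup hbdd ht'Λ
    rw [← hlam] at this
    linarith
  -- positivity of zbar
  have hjex : ∃ j, 0 < zbar j := by
    by_contra h
    push_neg at h
    have : ∀ j, zbar j = 0 := fun j => le_antisymm (h j) (hzbar0 j)
    rw [Finset.sum_congr rfl (fun j _ => this j)] at hzbarsum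
    simp at hzbarsum
  obtain ⟨j0, hj0⟩ := hjex
  have hlower : ∀ i, ε * zbar j0 ^ (m-1) ≤ tmul P zbar i := by
    intro i
    have h1 : ε * zbar j0 ^ (m-1) ≤ P i (fun _ => j0) * ∏ _t : Fin (m-1), zbar j0 := by
      rw [Finset.prod_const, Finset.card_univ, Fintype.card_fin]
      exact mul_le_mul_of_nonneg_right (hP i _) (pow_nonneg hj0.le _)
    refine le_trans h1 ?_
    unfold tmul
    apply Finset.single_le_sum (f := fun f => P i f * ∏ t, zbar (f t))
      (fun f _ => mul_nonneg (hPnn i f) (Finset.prod_nonneg fun t _ => hzbar0 _))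
      (Finset.mem_univ _)
  have hzbarpos : ∀ i, 0 < zbar i := by
    intro i
    rcases lt_or_eq_of_le (hzbar0 i) with h | h
    · exact h
    · exfalso
      have h1 := heq i
      rw [← h, zero_pow hm1, mul_zero] at h1
      have h2 := hlower i
      rw [h1] at h2
      nlinarith [pow_pos hj0 (m-1)]
  have hlampos : 0 < lam := by
    have h1 := heq j0
    have h2 := hlower j0
    nlinarith [pow_pos hj0 (m-1)]
  exact ⟨lam, zbar, hlampos, hzbarpos, hzbarsum, heq⟩

end Aux5
section Aux6
variable {m n : ℕ}

/-- Semipositivity: a strong M-tensor condition `ρ(B) < η` yields a positive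
vector with `B y^{m-1} < η y^{[m-1]}`. -/
lemma semipos (hm : 2 ≤ m) (hn : 1 ≤ n) (B : Tensor m n) (hB : TNonneg B) (η : ℝ)
    (hρ : rho B < η) :
    ∃ y : Fin n → ℝ, (∀ i, 0 < y i) ∧ ∀ i, tmul B y i < η * y i ^ (m - 1) := by
  classical
  haveI : Nonempty (Fin n) := Fin.pos_iff_nonempty.mp (by omega)
  have hm1 : m - 1 ≠ 0 := by omega
  by_contra hcon
  push_neg at hcon
  -- for each t, a positive perturbation
  have hper : ∀ t : ℕ, ∃ (lam : ℝ) (z : Fin n → ℝ), 0 < lam ∧ (∀ i, 0 < z i) ∧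
      (∑ i, z i) = 1 ∧
      (∀ i, tmul (fun i f => B i f + ((t:ℝ)+1)⁻¹) z i = lam * z i ^ (m - 1)) := by
    intro t
    apply perron hm hn _ (((t:ℝ)+1)⁻¹) (by positivity)
    intro i f
    have := hB i f
    linarith
  choose lams zs hlampos hzpos hzsum heqs using hper
  -- η ≤ lams t
  have hηle : ∀ t, η ≤ lams t := by
    intro t
    obtain ⟨i, hi⟩ := hcon (zs t) (hzpos t)
    have h1 : tmul B (zs t) i ≤ tmul (fun i f => B i f + ((t:ℝ)+1)⁻¹) (zs t) i := by
      apply tmul_entry_mono (fun i f => by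
        have hq : (0:ℝ) < ((t:ℝ)+1)⁻¹ := by positivity
        linarith) (fun i => (hzpos t i).le)
    have h2 := heqs t i
    have hp : 0 < zs t i ^ (m-1) := pow_pos (hzpos t i) _
    nlinarith
  -- lams t bounded above
  set M1 : ℝ := Finset.univ.sup' Finset.univ_nonempty
    (fun i => ∑ f : Fin (m-1) → Fin n, (B i f + 1)) with hM1
  have hlamle : ∀ t, lams t ≤ M1 := by
    intro t
    have hfe : ∀ i, lams t * zs t i ^ (m-1) ≤ tmul (fun i f => B i f + 1) (zs t) i := by
      intro i
      rw [← heqs t i]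
      apply tmul_entry_mono (fun i f => by
        have h1 : ((t:ℝ)+1)⁻¹ ≤ 1 := by
          rw [inv_le_one_iff₀]
          right
          push_cast
          linarith [Nat.cast_nonneg (α := ℝ) t]
        linarith) (fun i => (hzpos t i).le)
    exact ratio_le hm hn _ (fun i f => by have := hB i f; linarith) _ _
      (fun i => (hzpos t i).le) (hzsum t) hfe
  -- Bolzano–Weierstrass on zs
  have hmem : ∀ t, zs t ∈ Metric.closedBall (0 : Fin n → ℝ) 1 := by
    intro t
    rw [Metric.mem_closedBall, dist_zero_right]
    apply pi_norm_le_iff_of_nonneg zero_le_one |>.mpr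
    intro i
    rw [Real.norm_eq_abs, abs_of_nonneg (hzpos t i).le]
    calc zs t i ≤ ∑ l, zs t l :=
          Finset.single_le_sum (fun l _ => (hzpos t l).le) (Finset.mem_univ i)
      _ = 1 := hzsum t
  obtain ⟨zbar, -, φ, hφmono, hφtend⟩ :=
    tendsto_subseq_of_bounded Metric.isBounded_closedBall hmem
  -- Bolzano–Weierstrass on lams ∘ φ
  have hmem2 : ∀ t, lams (φ t) ∈ Metric.closedBall (0:ℝ) (|η| + |M1|) := by
    intro t
    rw [Metric.mem_closedBall, dist_zero_right, Real.norm_eq_abs]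
    rw [abs_le]
    constructor
    · have := hηle (φ t)
      have := neg_abs_le η
      have := abs_nonneg M1
      linarith
    · have := hlamle (φ t)
      have := le_abs_self M1
      have := abs_nonneg η
      linarith
  obtain ⟨lambar, -, ψ, hψmono, hψtend⟩ :=
    tendsto_subseq_of_bounded Metric.isBounded_closedBall hmem2
  set χ : ℕ → ℕ := φ ∘ ψ with hχ
  have hχtendz : Filter.Tendsto (fun j => zs (χ j)) Filter.atTop (nhds zbar) :=
    hφtend.comp (StrictMono.tendsto_atTop hψmono)
  have htendi : ∀ i, Filter.Tendsto (fun j => zs (χ j) i) Filter.atTop (nhds (zbar i)) :=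
    fun i => ((continuous_apply i).tendsto zbar).comp hχtendz
  have htendlam : Filter.Tendsto (fun j => lams (χ j)) Filter.atTop (nhds lambar) := hψtend
  have hzbar0 : ∀ i, 0 ≤ zbar i :=
    fun i => ge_of_tendsto (htendi i) (Filter.Eventually.of_forall fun j => (hzpos _ i).le)
  have hzbarsum : (∑ i, zbar i) = 1 := by
    have h1 : Filter.Tendsto (fun j => ∑ i, zs (χ j) i) Filter.atTop (nhds (∑ i, zbar i)) :=
      tendsto_finset_sum _ (fun i _ => htendi i)
    have h2 : (fun j => ∑ i, zs (χ j) i) = fun _ => (1:ℝ) := funext fun j => hzsum (χ j)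
    rw [h2] at h1
    exact (tendsto_nhds_unique tendsto_const_nhds h1).symm
  have hlambarge : η ≤ lambar :=
    ge_of_tendsto htendlam (Filter.Eventually.of_forall fun j => hηle (χ j))
  -- limit of eigen equations
  have heqbar : ∀ i, tmul B zbar i = lambar * zbar i ^ (m - 1) := by
    intro i
    have hL : Filter.Tendsto
        (fun j => tmul B (zs (χ j)) i + ((χ j : ℝ)+1)⁻¹) Filter.atTop
        (nhds (tmul B zbar i + 0)) := by
      apply Filter.Tendsto.add
      · exact ((tmul_continuous B i).tendsto zbar).comp hχtendz
      · have hb : ∀ j : ℕ, ((χ j : ℝ)+1)⁻¹ ≤ 1/((j:ℝ)+1) := by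
          intro j
          rw [one_div]
          apply inv_anti₀ (by positivity)
          have h5 : j ≤ χ j := (hφmono.comp hψmono).le_apply
          have h6 : (j:ℝ) ≤ (χ j : ℝ) := Nat.cast_le.mpr h5
          linarith
        apply tendsto_of_tendsto_of_tendsto_of_le_of_le
          (g := fun _ : ℕ => (0:ℝ)) (h := fun j : ℕ => 1/((j:ℝ)+1))
        · exact tendsto_const_nhds
        · exact tendsto_one_div_add_atTop_nhds_zero_nat
        · intro j; positivity
        · exact hb
    have hR : Filter.Tendsto (fun j => lams (χ j) * zs (χ j) i ^ (m-1)) Filter.atTop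
        (nhds (lambar * zbar i ^ (m-1))) :=
      Filter.Tendsto.mul htendlam ((htendi i).pow (m-1))
    have hEq : (fun j => tmul B (zs (χ j)) i + ((χ j : ℝ)+1)⁻¹)
        = fun j => lams (χ j) * zs (χ j) i ^ (m-1) := by
      funext j
      have h1 := heqs (χ j) i
      rw [tmul_add_const hm, hzsum (χ j), one_pow, mul_one] at h1
      exact h1
    rw [hEq] at hL
    have := tendsto_nhds_unique hL hR
    simpa using this
  -- lambar is an eigenvalue of B
  have hxne : (fun i => (zbar i : ℂ)) ≠ 0 := by
    intro hc
    have : ∀ i, zbar i = 0 := by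
      intro i
      have h3 := congrFun hc i
      rw [Pi.zero_apply] at h3
      exact_mod_cast h3
    rw [Finset.sum_congr rfl (fun j _ => this j)] at hzbarsum
    simp at hzbarsum
  have heig : IsEigenvalue B (lambar : ℂ) := by
    refine ⟨fun i => (zbar i : ℂ), hxne, ?_⟩
    intro i
    rw [tmulC_ofReal, heqbar i]
    push_cast
    ring
  have hmemS : (‖(lambar : ℂ)‖ : ℝ) ∈
      {r : ℝ | ∃ lam : ℂ, IsEigenvalue B lam ∧ r = ‖lam‖} :=
    ⟨(lambar : ℂ), heig, rfl⟩
  have hle := le_csSup (bddAbove_eigs hm hn B hB) hmemS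
  rw [Complex.norm_real, Real.norm_eq_abs] at hle hmemS
  have : rho B < η := hρ
  rw [rho] at this
  have h2 : η ≤ |lambar| := le_trans hlambarge (le_abs_self _)
  linarith
end Aux6
section Aux7
variable {m n : ℕ}

lemma mmul_subM (M N : Matrix (Fin n) (Fin n) ℝ) (T : Tensor m n) :
    mmul (M - N) T = mmul M T - mmul N T := by
  funext i f
  simp [mmul, sub_mul, Finset.sum_sub_distrib]

/-- The matrix of the Gauss–Seidel-type `𝓜₂`. -/
def CMat (A : Tensor m n) (α β : Fin n → ℝ) (k : ℕ) : Matrix (Fin n) (Fin n) ℝ :=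
  1 - Lmat A + Kmat A β k - Kmat A β k * Lmat A
    - DmatOf (mmul (Smat A α k) (Ltens A)) - LmatOf (mmul (Smat A α k) (Ltens A))
    - DmatOf (mmul (Kmat A β k) (Ftens A)) - LmatOf (mmul (Kmat A β k) (Ftens A))

lemma M2_eq_mmul (A : Tensor m n) (α β : Fin n → ℝ) (k : ℕ) :
    M2 A α β k k = mmul (CMat A α β k) (idT m n) := by
  unfold CMat
  simp only [mmul_subM, mmul_addM, mmul_mul, mmul_one]
  rfl

lemma maj_M2_eq (hm : 2 ≤ m) (A : Tensor m n) (α β : Fin n → ℝ) (k : ℕ) :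
    maj (M2 A α β k k) = CMat A α β k := by
  rw [M2_eq_mmul, maj_mmul, maj_idT hm, mul_one]

lemma tmul_M2 (hm : 2 ≤ m) (A : Tensor m n) (α β : Fin n → ℝ) (k : ℕ) (y : Fin n → ℝ) :
    tmul (M2 A α β k k) y = (CMat A α β k).mulVec (fun i => y i ^ (m-1)) := by
  rw [M2_eq_mmul, tmul_mmul]
  have h : tmul (idT m n) y = fun i => y i ^ (m-1) := funext (tmul_idT hm y)
  rw [h]

/-- `𝓜₂ - 𝓝₂ = P𝒜`. -/
lemma M2_sub_N2 (A : Tensor m n) (α β : Fin n → ℝ) (s k : ℕ) :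
    M2 A α β s k - N2 A α β s k = mmul (Pmat A α β s k) A := by
  have hA : A = idT m n - Ltens A - Ftens A := by
    unfold Ftens; abel
  have expand : ∀ M : Matrix (Fin n) (Fin n) ℝ,
      mmul M A = mmul M (idT m n) - mmul M (Ltens A) - mmul M (Ftens A) := by
    intro M
    rw [← mmul_sub, ← mmul_sub, ← hA]
  rw [Pmat, mmul_addM, mmul_addM, expand 1, expand (Smat A α s), expand (Kmat A β k)]
  simp only [mmul_one]
  unfold M2 N2 Falpha Fbeta
  abel

section Entries

lemma Sfac_nonneg (hm : 2 ≤ m) {A : Tensor m n} (hA : StrongM A) {α : Fin n → ℝ} {k : ℕ}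
    (hα : ∀ i : Fin n, (i : ℕ) + k < n → α i ∈ Set.Icc (0 : ℝ) 1)
    (hk1 : 1 ≤ k) {i : Fin n} (h : (i:ℕ) + k < n) :
    0 ≤ -(α i * maj A i ⟨(i:ℕ)+k, h⟩) := by
  rw [neg_mul_eq_mul_neg]
  apply mul_nonneg (hα i h).1
  rw [neg_nonneg]
  apply strongM_maj_offdiag hm hA
  intro hc
  rw [Fin.ext_iff] at hc
  simp at hc
  omega

lemma Kfac_nonneg (hm : 2 ≤ m) {A : Tensor m n} (hA : StrongM A) {β : Fin n → ℝ} {k : ℕ}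
    (hβ : ∀ i : Fin n, k ≤ (i : ℕ) → β i ∈ Set.Icc (0 : ℝ) 1)
    (hk1 : 1 ≤ k) {i : Fin n} (h : k ≤ (i:ℕ)) :
    0 ≤ -(β i * maj A i (finShiftDown i k)) := by
  rw [neg_mul_eq_mul_neg]
  apply mul_nonneg (hβ i h).1
  rw [neg_nonneg]
  apply strongM_maj_offdiag hm hA
  intro hc
  rw [Fin.ext_iff] at hc
  simp [finShiftDown] at hc
  omega

lemma Lmat_nonneg (hm : 2 ≤ m) {A : Tensor m n} (hA : StrongM A) (i j : Fin n) :
    0 ≤ Lmat A i j := by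
  unfold Lmat
  split_ifs with h
  · rw [neg_nonneg]
    apply strongM_maj_offdiag hm hA
    intro hc
    rw [Fin.ext_iff] at hc
    omega
  · exact le_rfl

lemma Umat_nonneg (hm : 2 ≤ m) {A : Tensor m n} (hA : StrongM A) (hdiag : UnitDiag A)
    (i j : Fin n) : 0 ≤ maj (Ftens A) i j := by
  rw [maj_Ftens hm A hdiag]
  split_ifs with h
  · rw [neg_nonneg]
    apply strongM_maj_offdiag hm hA
    intro hc
    rw [Fin.ext_iff] at hc
    omega
  · exact le_rfl

lemma SL_nonneg (hm : 2 ≤ m) {A : Tensor m n} (hA : StrongM A) {α : Fin n → ℝ} {k : ℕ}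
    (hα : ∀ i : Fin n, (i : ℕ) + k < n → α i ∈ Set.Icc (0 : ℝ) 1) (hk1 : 1 ≤ k)
    (i j : Fin n) : 0 ≤ (Smat A α k * Lmat A) i j := by
  rw [Smat_mul_apply]
  split_ifs with h
  · exact mul_nonneg (Sfac_nonneg hm hA hα hk1 h) (Lmat_nonneg hm hA _ _)
  · exact le_rfl

lemma SU_nonneg (hm : 2 ≤ m) {A : Tensor m n} (hA : StrongM A) (hdiag : UnitDiag A)
    {α : Fin n → ℝ} {k : ℕ}
    (hα : ∀ i : Fin n, (i : ℕ) + k < n → α i ∈ Set.Icc (0 : ℝ) 1) (hk1 : 1 ≤ k)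
    (i j : Fin n) : 0 ≤ (Smat A α k * maj (Ftens A)) i j := by
  rw [Smat_mul_apply]
  split_ifs with h
  · exact mul_nonneg (Sfac_nonneg hm hA hα hk1 h) (Umat_nonneg hm hA hdiag _ _)
  · exact le_rfl

lemma KL_nonneg (hm : 2 ≤ m) {A : Tensor m n} (hA : StrongM A) {β : Fin n → ℝ} {k : ℕ}
    (hβ : ∀ i : Fin n, k ≤ (i : ℕ) → β i ∈ Set.Icc (0 : ℝ) 1) (hk1 : 1 ≤ k)
    (i j : Fin n) : 0 ≤ (Kmat A β k * Lmat A) i j := by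
  rw [Kmat_mul_apply A β k hk1]
  split_ifs with h
  · exact mul_nonneg (Kfac_nonneg hm hA hβ hk1 h) (Lmat_nonneg hm hA _ _)
  · exact le_rfl

lemma KU_nonneg (hm : 2 ≤ m) {A : Tensor m n} (hA : StrongM A) (hdiag : UnitDiag A)
    {β : Fin n → ℝ} {k : ℕ}
    (hβ : ∀ i : Fin n, k ≤ (i : ℕ) → β i ∈ Set.Icc (0 : ℝ) 1) (hk1 : 1 ≤ k)
    (i j : Fin n) : 0 ≤ (Kmat A β k * maj (Ftens A)) i j := by
  rw [Kmat_mul_apply A β k hk1]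
  split_ifs with h
  · exact mul_nonneg (Kfac_nonneg hm hA hβ hk1 h) (Umat_nonneg hm hA hdiag _ _)
  · exact le_rfl

lemma Smat_entry_nonneg (hm : 2 ≤ m) {A : Tensor m n} (hA : StrongM A) {α : Fin n → ℝ}
    {k : ℕ} (hα : ∀ i : Fin n, (i : ℕ) + k < n → α i ∈ Set.Icc (0 : ℝ) 1) (hk1 : 1 ≤ k)
    (i j : Fin n) : 0 ≤ Smat A α k i j := by
  unfold Smat
  split_ifs with h
  · rw [neg_mul_eq_mul_neg]
    apply mul_nonneg
    · exact (hα i (by omega : (i:ℕ) + k < n)).1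
    · rw [neg_nonneg]
      apply strongM_maj_offdiag hm hA
      intro hc
      rw [Fin.ext_iff] at hc
      omega
  · exact le_rfl

lemma Kmat_entry_nonneg (hm : 2 ≤ m) {A : Tensor m n} (hA : StrongM A) {β : Fin n → ℝ}
    {k : ℕ} (hβ : ∀ i : Fin n, k ≤ (i : ℕ) → β i ∈ Set.Icc (0 : ℝ) 1) (hk1 : 1 ≤ k)
    (i j : Fin n) : 0 ≤ Kmat A β k i j := by
  unfold Kmat
  split_ifs with h
  · rw [neg_mul_eq_mul_neg]
    apply mul_nonneg
    · exact (hβ i (by omega : k ≤ (i:ℕ))).1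
    · rw [neg_nonneg]
      apply strongM_maj_offdiag hm hA
      intro hc
      rw [Fin.ext_iff] at hc
      omega
  · exact le_rfl

lemma DmatOf_SL (hm : 2 ≤ m) (A : Tensor m n) (α : Fin n → ℝ) (k : ℕ) (i j : Fin n) :
    DmatOf (mmul (Smat A α k) (Ltens A)) i j
      = if i = j then (Smat A α k * Lmat A) i j else 0 := by
  unfold DmatOf
  rw [maj_mmul, maj_Ltens hm]

lemma LmatOf_SL (hm : 2 ≤ m) (A : Tensor m n) (α : Fin n → ℝ) (k : ℕ) (i j : Fin n) :
    LmatOf (mmul (Smat A α k) (Ltens A)) i j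
      = if (j:ℕ) < (i:ℕ) then (Smat A α k * Lmat A) i j else 0 := by
  unfold LmatOf
  rw [maj_mmul, maj_Ltens hm]

lemma DmatOf_KU (A : Tensor m n) (β : Fin n → ℝ) (k : ℕ) (i j : Fin n) :
    DmatOf (mmul (Kmat A β k) (Ftens A)) i j
      = if i = j then (Kmat A β k * maj (Ftens A)) i j else 0 := by
  unfold DmatOf
  rw [maj_mmul]

lemma LmatOf_KU (A : Tensor m n) (β : Fin n → ℝ) (k : ℕ) (i j : Fin n) :
    LmatOf (mmul (Kmat A β k) (Ftens A)) i j
      = if (j:ℕ) < (i:ℕ) then (Kmat A β k * maj (Ftens A)) i j else 0 := by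
  unfold LmatOf
  rw [maj_mmul]

lemma CMat_upper (hm : 2 ≤ m) (A : Tensor m n) (α β : Fin n → ℝ) (k : ℕ) (hk1 : 1 ≤ k)
    (i j : Fin n) (hij : (i:ℕ) < (j:ℕ)) : CMat A α β k i j = 0 := by
  have hne : i ≠ j := by intro hc; rw [Fin.ext_iff] at hc; omega
  unfold CMat
  simp only [Matrix.sub_apply, Matrix.add_apply]
  rw [Matrix.one_apply_ne hne]
  have h1 : Lmat A i j = 0 := by unfold Lmat; rw [if_neg (by omega)]
  have h2 : Kmat A β k i j = 0 := by unfold Kmat; rw [if_neg (by omega)]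
  have h3 : (Kmat A β k * Lmat A) i j = 0 := by
    rw [Kmat_mul_apply A β k hk1]
    split_ifs with h
    · have hz : Lmat A (finShiftDown i k) j = 0 := by
        unfold Lmat
        rw [if_neg]
        simp only [finShiftDown]
        omega
      rw [hz, mul_zero]
    · rfl
  have h4 := DmatOf_SL hm A α k i j
  have h5 := LmatOf_SL hm A α k i j
  have h6 := DmatOf_KU A β k i j
  have h7 := LmatOf_KU A β k i j
  rw [if_neg hne] at h4 h6
  rw [if_neg (by omega : ¬ (j:ℕ) < (i:ℕ))] at h5 h7
  rw [h1, h2, h3, h4, h5, h6, h7]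
  ring

lemma CMat_diag (hm : 2 ≤ m) (A : Tensor m n) (hdiag : UnitDiag A)
    (α β : Fin n → ℝ) (k : ℕ) (hk1 : 1 ≤ k) (i : Fin n) :
    CMat A α β k i i = 1 - condExpr A α β k i := by
  unfold CMat
  simp only [Matrix.sub_apply, Matrix.add_apply]
  rw [Matrix.one_apply_eq]
  have h1 : Lmat A i i = 0 := by unfold Lmat; rw [if_neg (by omega)]
  have h2 : Kmat A β k i i = 0 := by unfold Kmat; rw [if_neg (by omega)]
  have h3 : (Kmat A β k * Lmat A) i i = 0 := by
    rw [Kmat_mul_apply A β k hk1]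
    split_ifs with h
    · have hz : Lmat A (finShiftDown i k) i = 0 := by
        unfold Lmat
        rw [if_neg]
        simp only [finShiftDown]
        omega
      rw [hz, mul_zero]
    · rfl
  have h5 := LmatOf_SL hm A α k i i
  have h7 := LmatOf_KU A β k i i
  rw [if_neg (by omega : ¬ (i:ℕ) < (i:ℕ))] at h5 h7
  have h4 : DmatOf (mmul (Smat A α k) (Ltens A)) i i
      = if h : (i:ℕ) + k < n then
          α i * maj A i (finShiftUp i k h) * maj A (finShiftUp i k h) i else 0 := by
    rw [DmatOf_SL hm, if_pos rfl, Smat_mul_apply]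
    split_ifs with h
    · have hL : Lmat A ⟨(i:ℕ)+k, h⟩ i = -(maj A ⟨(i:ℕ)+k, h⟩ i) := by
        unfold Lmat
        rw [if_pos]
        simp only []
        omega
      rw [hL]
      unfold finShiftUp
      ring
    · rfl
  have h6 : DmatOf (mmul (Kmat A β k) (Ftens A)) i i
      = if k ≤ (i:ℕ) then
          β i * maj A i (finShiftDown i k) * maj A (finShiftDown i k) i else 0 := by
    rw [DmatOf_KU, if_pos rfl, Kmat_mul_apply A β k hk1]
    split_ifs with h
    · have hU : maj (Ftens A) (finShiftDown i k) i = -(maj A (finShiftDown i k) i) := by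
        rw [maj_Ftens hm A hdiag, if_pos]
        simp only [finShiftDown]
        omega
      rw [hU]
      ring
    · rfl
  rw [h1, h2, h3, h4, h5, h6, h7]
  unfold condExpr
  ring

lemma CMat_lower (hm : 2 ≤ m) (A : Tensor m n) (hA : StrongM A) (hdiag : UnitDiag A)
    (α β : Fin n → ℝ) (k : ℕ) (hk1 : 1 ≤ k)
    (hα : ∀ i : Fin n, (i : ℕ) + k < n → α i ∈ Set.Icc (0 : ℝ) 1)
    (hβ : ∀ i : Fin n, k ≤ (i : ℕ) → β i ∈ Set.Icc (0 : ℝ) 1)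
    (i j : Fin n) (hji : (j:ℕ) < (i:ℕ)) : CMat A α β k i j ≤ 0 := by
  have hne : i ≠ j := by intro hc; rw [Fin.ext_iff] at hc; omega
  unfold CMat
  simp only [Matrix.sub_apply, Matrix.add_apply]
  rw [Matrix.one_apply_ne hne]
  have hLm : Lmat A i j = -(maj A i j) := by unfold Lmat; rw [if_pos hji]
  have hmaj : maj A i j ≤ 0 := by
    apply strongM_maj_offdiag hm hA
    intro hc
    rw [Fin.ext_iff] at hc
    omega
  have t1 : -Lmat A i j + Kmat A β k i j ≤ 0 := by
    rw [hLm, neg_neg]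
    unfold Kmat
    split_ifs with h
    · have hβi := hβ i (by omega : k ≤ (i:ℕ))
      nlinarith [hβi.1, hβi.2]
    · simpa using hmaj
  have t2 := KL_nonneg hm hA hβ hk1 i j
  have t3 := SL_nonneg hm hA hα hk1 i j
  have t4 := KU_nonneg hm hA hdiag hβ hk1 i j
  have h4 := DmatOf_SL hm A α k i j
  have h6 := DmatOf_KU A β k i j
  rw [if_neg hne] at h4 h6
  have h5 := LmatOf_SL hm A α k i j
  have h7 := LmatOf_KU A β k i j
  rw [if_pos hji] at h5 h7
  rw [h4, h5, h6, h7]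
  linarith

end Entries
end Aux7
section Aux8
variable {m n : ℕ}

lemma mmul_idT_nonconst (M : Matrix (Fin n) (Fin n) ℝ) {f : Fin (m-1) → Fin n}
    (hf : ∀ j, f ≠ fun _ => j) (i : Fin n) : mmul M (idT m n) i f = 0 := by
  unfold mmul
  apply Finset.sum_eq_zero
  intro l _
  rw [idT_apply_nonconst hf, mul_zero]

lemma Ltens_nonconst (A : Tensor m n) {f : Fin (m-1) → Fin n}
    (hf : ∀ j, f ≠ fun _ => j) (l : Fin n) : Ltens A l f = 0 :=
  mmul_idT_nonconst _ hf l

lemma maj_N2 (hm : 2 ≤ m) (A : Tensor m n) (α β : Fin n → ℝ) (k : ℕ) :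
    maj (N2 A α β k k)
      = maj (Ftens A) - Smat A α k + Smat A α k * maj (Ftens A)
        + (Smat A α k * Lmat A - DmatOf (mmul (Smat A α k) (Ltens A))
            - LmatOf (mmul (Smat A α k) (Ltens A)))
        + (Kmat A β k * maj (Ftens A) - DmatOf (mmul (Kmat A β k) (Ftens A))
            - LmatOf (mmul (Kmat A β k) (Ftens A))) := by
  unfold N2 Falpha Fbeta Dalpha Lalpha Dbeta Lbeta
  have e1 : ∀ (T S : Tensor m n), maj (T - S) = maj T - maj S := fun _ _ => rfl
  have e2 : ∀ (T S : Tensor m n), maj (T + S) = maj T + maj S := fun _ _ => rfl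
  rw [e2, e2, e2, e1, e1, e1, e1, e1]
  simp only [maj_mmul, maj_idT hm, maj_Ltens hm, mul_one]

lemma maj_N2_nonneg (hm : 2 ≤ m) (A : Tensor m n) (hA : StrongM A) (hdiag : UnitDiag A)
    (α β : Fin n → ℝ) (k : ℕ) (hk1 : 1 ≤ k)
    (hα : ∀ i : Fin n, (i : ℕ) + k < n → α i ∈ Set.Icc (0 : ℝ) 1)
    (hβ : ∀ i : Fin n, k ≤ (i : ℕ) → β i ∈ Set.Icc (0 : ℝ) 1)
    (i j : Fin n) : 0 ≤ maj (N2 A α β k k) i j := by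
  rw [maj_N2 hm]
  simp only [Matrix.sub_apply, Matrix.add_apply]
  have h4 := DmatOf_SL hm A α k i j
  have h5 := LmatOf_SL hm A α k i j
  have h6 := DmatOf_KU A β k i j
  have h7 := LmatOf_KU A β k i j
  have hSU := SU_nonneg hm hA hdiag hα hk1 i j
  have hSL := SL_nonneg hm hA hα hk1 i j
  have hKU := KU_nonneg hm hA hdiag hβ hk1 i j
  rcases lt_trichotomy ((j:ℕ)) ((i:ℕ)) with h | h | h
  · -- j < i
    have hne : i ≠ j := by intro hc; rw [Fin.ext_iff] at hc; omega
    rw [if_neg hne] at h4 h6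
    rw [if_pos h] at h5 h7
    have hU : maj (Ftens A) i j = 0 := by
      rw [maj_Ftens hm A hdiag, if_neg (by omega)]
    have hS : Smat A α k i j = 0 := by
      unfold Smat; rw [if_neg (by omega)]
    rw [h4, h5, h6, h7, hU, hS]
    linarith
  · -- j = i
    have heq : i = j := by rw [Fin.ext_iff]; omega
    rw [if_pos heq] at h4 h6
    rw [if_neg (by omega)] at h5 h7
    have hU : maj (Ftens A) i j = 0 := by
      rw [maj_Ftens hm A hdiag, if_neg (by omega)]
    have hS : Smat A α k i j = 0 := by
      unfold Smat; rw [if_neg (by omega)]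
    rw [h4, h5, h6, h7, hU, hS]
    linarith
  · -- i < j
    have hne : i ≠ j := by intro hc; rw [Fin.ext_iff] at hc; omega
    rw [if_neg hne] at h4 h6
    rw [if_neg (by omega)] at h5 h7
    have hU : maj (Ftens A) i j = -(maj A i j) := by
      rw [maj_Ftens hm A hdiag, if_pos h]
    have hmaj : maj A i j ≤ 0 := by
      apply strongM_maj_offdiag hm hA
      intro hc
      rw [Fin.ext_iff] at hc
      omega
    have hS : -(maj A i j) - Smat A α k i j ≥ 0 := by
      unfold Smat
      split_ifs with hcase
      · have hαi := hα i (by omega : (i:ℕ) + k < n)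
        nlinarith [hαi.1, hαi.2]
      · linarith
    rw [h4, h5, h6, h7, hU]
    linarith

lemma N2_nonneg (hm : 2 ≤ m) (A : Tensor m n) (hA : StrongM A) (hdiag : UnitDiag A)
    (α β : Fin n → ℝ) (k : ℕ) (hk1 : 1 ≤ k)
    (hα : ∀ i : Fin n, (i : ℕ) + k < n → α i ∈ Set.Icc (0 : ℝ) 1)
    (hβ : ∀ i : Fin n, k ≤ (i : ℕ) → β i ∈ Set.Icc (0 : ℝ) 1) :
    TNonneg (N2 A α β k k) := by
  intro i f
  by_cases hc : ∃ j, f = fun _ => j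
  · obtain ⟨j, rfl⟩ := hc
    exact maj_N2_nonneg hm A hA hdiag α β k hk1 hα hβ i j
  · push_neg at hc
    have hFa : Falpha A α k i f = 0 := by
      unfold Falpha Dalpha Lalpha
      have h1 : mmul (Smat A α k) (Ltens A) i f = 0 := by
        rw [mmul_Smat_apply]
        split_ifs with h
        · rw [Ltens_nonconst A hc, mul_zero]
        · rfl
      have h2 := mmul_idT_nonconst (DmatOf (mmul (Smat A α k) (Ltens A))) hc i
      have h3 := mmul_idT_nonconst (LmatOf (mmul (Smat A α k) (Ltens A))) hc i
      show mmul (Smat A α k) (Ltens A) i f - _ - _ = 0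
      rw [h1, h2, h3]
      ring
    have hFb : 0 ≤ Fbeta A β k i f := by
      unfold Fbeta Dbeta Lbeta
      have h2 := mmul_idT_nonconst (DmatOf (mmul (Kmat A β k) (Ftens A))) hc i
      have h3 := mmul_idT_nonconst (LmatOf (mmul (Kmat A β k) (Ftens A))) hc i
      have h1 : 0 ≤ mmul (Kmat A β k) (Ftens A) i f := by
        rw [mmul_Kmat_apply A β k hk1]
        split_ifs with h
        · exact mul_nonneg (Kfac_nonneg hm hA hβ hk1 h) (Ftens_nonneg hm hA hdiag _ _)
        · exact le_rfl
      show 0 ≤ mmul (Kmat A β k) (Ftens A) i f - _ - _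
      rw [h2, h3]
      linarith
    have hSid : mmul (Smat A α k) (idT m n) i f = 0 := mmul_idT_nonconst _ hc i
    have hSF : 0 ≤ mmul (Smat A α k) (Ftens A) i f := by
      rw [mmul_Smat_apply]
      split_ifs with h
      · exact mul_nonneg (Sfac_nonneg hm hA hα hk1 h) (Ftens_nonneg hm hA hdiag _ _)
      · exact le_rfl
    have hF := Ftens_nonneg hm hA hdiag i f
    show 0 ≤ Ftens A i f - mmul (Smat A α k) (idT m n) i f
      + mmul (Smat A α k) (Ftens A) i f + Falpha A α k i f + Fbeta A β k i f
    rw [hSid, hFa]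
    linarith
end Aux8
theorem stmt9 {m n : ℕ} (hm : 2 ≤ m) (hn : 1 ≤ n)
    (A : Tensor m n) (hA : StrongM A) (hdiag : UnitDiag A)
    (k : ℕ) (hk1 : 1 ≤ k) (hk2 : k ≤ n - 1)
    (α β : Fin n → ℝ)
    (hα : ∀ i : Fin n, (i : ℕ) + k < n → α i ∈ Set.Icc (0 : ℝ) 1)
    (hβ : ∀ i : Fin n, k ≤ (i : ℕ) → β i ∈ Set.Icc (0 : ℝ) 1)
    (hcond : Cond A α β k) :
    IsUnit (maj (M2 A α β k k)).det ∧
    (∀ i j, 0 ≤ (maj (M2 A α β k k))⁻¹ i j) ∧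
    TNonneg (mmul (maj (M2 A α β k k))⁻¹ (N2 A α β k k)) ∧
    rho (mmul (maj (M2 A α β k k))⁻¹ (N2 A α β k k)) < 1 := by
  classical
  haveI : Nonempty (Fin n) := Fin.pos_iff_nonempty.mp (by omega)
  have hmaj : maj (M2 A α β k k) = CMat A α β k := maj_M2_eq hm A α β k
  set C := CMat A α β k with hCdef
  have hup : ∀ i j : Fin n, (i:ℕ) < (j:ℕ) → C i j = 0 :=
    fun i j h => CMat_upper hm A α β k hk1 i j h
  have hdiagpos : ∀ i, 0 < C i i := by
    intro i
    rw [hCdef, CMat_diag hm A hdiag α β k hk1]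
    have := (hcond i).2
    linarith
  have hlow : ∀ i j : Fin n, (j:ℕ) < (i:ℕ) → C i j ≤ 0 :=
    fun i j h => CMat_lower hm A hA hdiag α β k hk1 hα hβ i j h
  obtain ⟨G, hCG, hGC, hGnn, hGdiag⟩ := lower_tri_inverse hn C hup hdiagpos hlow
  have hdet : IsUnit C.det := Matrix.isUnit_det_of_left_inverse hGC
  have hCinv : C⁻¹ = G := Matrix.inv_eq_left_inv hGC
  have hmajinv : (maj (M2 A α β k k))⁻¹ = G := by rw [hmaj, hCinv]
  have hN2 : TNonneg (N2 A α β k k) := N2_nonneg hm A hA hdiag α β k hk1 hα hβ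
  have hTnn : TNonneg (mmul (maj (M2 A α β k k))⁻¹ (N2 A α β k k)) := by
    rw [hmajinv]
    intro i f
    apply Finset.sum_nonneg
    intro l _
    exact mul_nonneg (hGnn i l) (hN2 l f)
  refine ⟨by rw [hmaj]; exact hdet, by rw [hmajinv]; intro i j; exact hGnn i j, hTnn, ?_⟩
  -- the spectral radius bound
  obtain ⟨η, B, hBnn, hρ, hAeq⟩ := hA
  obtain ⟨y, hy, hBy⟩ := semipos hm hn B hBnn η hρ
  set z : Fin n → ℝ := fun i => y i ^ (m-1) with hzdef
  have hzpos : ∀ i, 0 < z i := fun i => pow_pos (hy i) _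
  have hw : ∀ i, 0 < tmul A y i := by
    intro i
    have h1 : tmul A y i = η * z i - tmul B y i := by
      rw [hAeq, tmul_sub, tmul_smul, tmul_idT hm]
    rw [h1]
    have := hBy i
    have h2 : η * y i ^ (m-1) = η * z i := rfl
    linarith [hBy i]
  set T := mmul (maj (M2 A α β k k))⁻¹ (N2 A α β k k) with hTdef
  set w : Fin n → ℝ := tmul A y with hwdef
  have hNy : tmul (N2 A α β k k) y
      = C.mulVec z - (Pmat A α β k k).mulVec w := by
    have h1 := congrArg (fun (X : Tensor m n) => tmul X y) (M2_sub_N2 A α β k k)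
    have h2 : ∀ i, tmul (M2 A α β k k - N2 A α β k k) y i
        = tmul (M2 A α β k k) y i - tmul (N2 A α β k k) y i := fun i => tmul_sub _ _ _ _
    have h3 : tmul (mmul (Pmat A α β k k) A) y = (Pmat A α β k k).mulVec w :=
      tmul_mmul _ _ _
    have h4 : tmul (M2 A α β k k) y = C.mulVec z := tmul_M2 hm A α β k y
    funext i
    have h5 := congrFun h1 i
    rw [h2 i] at h5
    rw [Pi.sub_apply]
    have h6 := congrFun h3 i
    have h7 := congrFun h4 i
    linarith [h5, h6, h7]
  have hPw : ∀ i, 0 < (Pmat A α β k k).mulVec w i := by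
    intro i
    unfold Pmat
    rw [Matrix.add_mulVec, Matrix.add_mulVec, Matrix.one_mulVec]
    have h1 : 0 ≤ (Smat A α k).mulVec w i := by
      simp only [Matrix.mulVec, dotProduct]
      apply Finset.sum_nonneg
      intro l _
      exact mul_nonneg (Smat_entry_nonneg hm ⟨η, B, hBnn, hρ, hAeq⟩ hα hk1 i l) (hw l).le
    have h2 : 0 ≤ (Kmat A β k).mulVec w i := by
      simp only [Matrix.mulVec, dotProduct]
      apply Finset.sum_nonneg
      intro l _
      exact mul_nonneg (Kmat_entry_nonneg hm ⟨η, B, hBnn, hρ, hAeq⟩ hβ hk1 i l) (hw l).le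
    have h3 := hw i
    simp only [Pi.add_apply]
    linarith
  have hTy : ∀ i, tmul T y i = z i - G.mulVec ((Pmat A α β k k).mulVec w) i := by
    intro i
    rw [hTdef, tmul_mmul, hmajinv, hNy, Matrix.mulVec_sub, Matrix.mulVec_mulVec, hGC,
      Matrix.one_mulVec]
    rfl
  have hGPwpos : ∀ i, 0 < G.mulVec ((Pmat A α β k k).mulVec w) i := by
    intro i
    have h1 : G i i * (Pmat A α β k k).mulVec w i
        ≤ ∑ l, G i l * (Pmat A α β k k).mulVec w l := by
      apply Finset.single_le_sum (f := fun l => G i l * (Pmat A α β k k).mulVec w l)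
        (fun l _ => mul_nonneg (hGnn i l) (hPw l).le) (Finset.mem_univ i)
    have h2 : 0 < G i i * (Pmat A α β k k).mulVec w i := mul_pos (hGdiag i) (hPw i)
    have h3 : G.mulVec ((Pmat A α β k k).mulVec w) i
        = ∑ l, G i l * (Pmat A α β k k).mulVec w l := by
      simp only [Matrix.mulVec, dotProduct]
    rw [h3]
    linarith
  have hTylt : ∀ i, tmul T y i < z i := by
    intro i
    rw [hTy i]
    linarith [hGPwpos i]
  have hTynn : ∀ i, 0 ≤ tmul T y i := fun i => tmul_nonneg hTnn (fun j => (hy j).le) i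
  set θ : ℝ := Finset.univ.sup' Finset.univ_nonempty (fun i => tmul T y i / z i) with hθdef
  have hθlt : θ < 1 := by
    rw [hθdef, Finset.sup'_lt_iff]
    intro i _
    rw [div_lt_one (hzpos i)]
    exact hTylt i
  have hθnn : 0 ≤ θ := by
    have h1 : tmul T y (Classical.arbitrary _) / z (Classical.arbitrary _) ≤ θ :=
      Finset.le_sup' (f := fun i => tmul T y i / z i) (Finset.mem_univ _)
    have h2 : 0 ≤ tmul T y (Classical.arbitrary _) / z (Classical.arbitrary _) :=
      div_nonneg (hTynn _) (hzpos _).le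
    linarith
  have hbound : ∀ i, tmul T y i ≤ θ * y i ^ (m-1) := by
    intro i
    have h1 : tmul T y i / z i ≤ θ :=
      Finset.le_sup' (f := fun i => tmul T y i / z i) (Finset.mem_univ i)
    rw [div_le_iff₀ (hzpos i)] at h1
    calc tmul T y i ≤ θ * z i := h1
      _ = θ * y i ^ (m-1) := rfl
  have heig := eig_le_ratio hm hn T hTnn y hy θ hbound
  have hfinal : rho T ≤ θ := by
    apply Real.sSup_le _ hθnn
    rintro r ⟨lam, hlam, rfl⟩
    exact heig lam hlam
  exact lt_of_le_of_lt hfinal hθlt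

end

end MultilinearPaper
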